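/- arXiv:2506.20753 — 5 statements merged into one kernel-verified Lean document; each statement's English description precedes it below -/
import Mathlib

section
/- For all finite reflexive graphs G and H and every positive integer s, if H is a retract of G then c_{s,s}(G) ≥ c_{s,s}(H). -/
open SimpleGraph

variable {V : Type*}

/-- A cop of speed `s` may move from `u` to `v` by traversing at most `s` edges. -/
def copStep (G : SimpleGraph V) (s : ℕ) (u v : V) : Prop :=
  ∃ p : G.Walk u v, p.length ≤ s

/-- A robber of speed `s` may move from `u` to `v` by traversing at most `s` edges,
never passing through a vertex of `S` (the set of vertices occupied by cops). -/
def robberStep (G : SimpleGraph V) (s : ℕ) (S : Set V) (u v : V) : Prop :=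
  ∃ p : G.Walk u v, p.length ≤ s ∧ ∀ x ∈ p.support.tail, x ∉ S

/-- `CanCatch G sc sr n cops r` : cops (of speed `sc`) at positions `cops`, robber
(of speed `sr`) at `r`, cops about to move; the cops can force a capture within
`n` further rounds. -/
def CanCatch (G : SimpleGraph V) (sc sr : ℕ) {k : ℕ} : ℕ → (Fin k → V) → V → Prop
  | 0, cops, r => ∃ i, cops i = r
  | n + 1, cops, r => (∃ i, cops i = r) ∨
      ∃ cops' : Fin k → V, (∀ i, copStep G sc (cops i) (cops' i)) ∧
        ((∃ i, cops' i = r) ∨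
          ∀ r', robberStep G sr {x | ∃ i, cops' i = x} r r' →
            CanCatch G sc sr n cops' r')

/-- The speed-`(sc, sr)` cop number of `G`: the least number `k` of cops which have
a winning strategy when the cops move with speed `sc` and the robber with speed `sr`.
The ordinary cop number is `copNumber G 1 1`. -/
noncomputable def copNumber (G : SimpleGraph V) (sc sr : ℕ) : ℕ :=
  sInf {k : ℕ | ∃ cops : Fin k → V, ∀ r : V, ∃ n : ℕ, CanCatch G sc sr n cops r}

/-- The `s`-th power of `G` : distinct vertices are adjacent iff their distance
in `G` is at most `s`. -/
def graphPow (G : SimpleGraph V) (s : ℕ) : SimpleGraph V where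
  Adj u v := u ≠ v ∧ ∃ p : G.Walk u v, p.length ≤ s
  symm := by
    constructor
    rintro u v ⟨h, p, hp⟩
    exact ⟨h.symm, p.reverse, by simpa using hp⟩
  loopless := by constructor; rintro u ⟨h, -⟩; exact h rfl


lemma mapWalk' {W : Type*} (G : SimpleGraph V) (H : SimpleGraph W) (φ : V → W)
    (hhom : ∀ u v, G.Adj u v → φ u = φ v ∨ H.Adj (φ u) (φ v)) :
    ∀ {u v : V} (p : G.Walk u v), ∃ q : H.Walk (φ u) (φ v), q.length ≤ p.length := by
  intro u v p
  induction p with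
  | nil => exact ⟨.nil, le_refl _⟩
  | cons h p ih =>
    obtain ⟨q, hq⟩ := ih
    rcases hhom _ _ h with he | ha
    · exact ⟨q.copy he.symm rfl, by simpa using hq.trans (Nat.le_succ _)⟩
    · exact ⟨q.cons ha, by simpa using Nat.succ_le_succ hq⟩

lemma liftWalk' {W : Type*} (G : SimpleGraph V) (H : SimpleGraph W) (ι : W → V)
    (hsub : ∀ a b, H.Adj a b → G.Adj (ι a) (ι b)) :
    ∀ {u v : W} (p : H.Walk u v), ∃ q : G.Walk (ι u) (ι v),
      q.length = p.length ∧ q.support = p.support.map ι := by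
  intro u v p
  induction p with
  | nil => exact ⟨.nil, rfl, by simp⟩
  | cons h p ih =>
    obtain ⟨q, hq1, hq2⟩ := ih
    exact ⟨q.cons (hsub _ _ h), by simp [hq1], by simp [hq2]⟩

lemma simCatch {W : Type*} (G : SimpleGraph V) (H : SimpleGraph W) (s : ℕ)
    (ι : W → V)
    (hsub : ∀ a b, H.Adj a b → G.Adj (ι a) (ι b))
    (φ : V → W)
    (hhom : ∀ u v, G.Adj u v → φ u = φ v ∨ H.Adj (φ u) (φ v))
    (hfix : ∀ a, φ (ι a) = a) {k : ℕ} :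
    ∀ (n : ℕ) (cops : Fin k → V) (r : W),
      CanCatch G s s n cops (ι r) → CanCatch H s s n (φ ∘ cops) r := by
  intro n
  induction n with
  | zero =>
    rintro cops r ⟨i, hi⟩
    exact ⟨i, by simp [Function.comp, hi, hfix]⟩
  | succ n ih =>
    rintro cops r (⟨i, hi⟩ | ⟨cops', hstep, hrest⟩)
    · exact Or.inl ⟨i, by simp [Function.comp, hi, hfix]⟩
    · refine Or.inr ⟨φ ∘ cops', ?_, ?_⟩
      · intro i
        obtain ⟨p, hp⟩ := hstep i
        obtain ⟨q, hq⟩ := mapWalk' G H φ hhom p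
        exact ⟨q, hq.trans hp⟩
      · rcases hrest with ⟨i, hi⟩ | hall
        · exact Or.inl ⟨i, by simp [Function.comp, hi, hfix]⟩
        · refine Or.inr ?_
          rintro r' ⟨p, hlen, havoid⟩
          apply ih
          apply hall (ι r')
          obtain ⟨q, hqlen, hqsup⟩ := liftWalk' G H ι hsub p
          refine ⟨q, hqlen ▸ hlen, ?_⟩
          rintro x hx ⟨i, hix⟩
          have hxsup : x ∈ (p.support.map ι).tail := hqsup ▸ hx
          rw [← List.map_tail] at hxsup
          obtain ⟨y, hy, rfl⟩ := List.mem_map.mp hxsup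
          exact havoid y hy ⟨i, by rw [Function.comp_apply, hix, hfix]⟩

/-- If `H` (a reflexive graph on `W`, embedded in `G` as a subgraph via `ι`) is a
retract of `G` via the retraction `φ`, then `c_{s,s}(G) ≥ c_{s,s}(H)`. -/
theorem statement1 {W : Type*} [Fintype V] [Fintype W]
    (G : SimpleGraph V) (H : SimpleGraph W) (s : ℕ) (hs : 0 < s)
    (ι : W → V) (hinj : Function.Injective ι)
    (hsub : ∀ a b, H.Adj a b → G.Adj (ι a) (ι b))
    (φ : V → W)
    (hhom : ∀ u v, G.Adj u v → φ u = φ v ∨ H.Adj (φ u) (φ v))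
    (hfix : ∀ a, φ (ι a) = a) :
    copNumber H s s ≤ copNumber G s s := by
  have hsub' : {k : ℕ | ∃ cops : Fin k → V, ∀ r : V, ∃ n : ℕ, CanCatch G s s n cops r} ⊆
      {k : ℕ | ∃ cops : Fin k → W, ∀ r : W, ∃ n : ℕ, CanCatch H s s n cops r} := by
    rintro k ⟨cops, hcops⟩
    refine ⟨φ ∘ cops, fun r => ?_⟩
    obtain ⟨n, hn⟩ := hcops (ι r)
    exact ⟨n, simCatch G H s ι hsub φ hhom hfix n cops r hn⟩
  have hne : {k : ℕ | ∃ cops : Fin k → V, ∀ r : V, ∃ n : ℕ, CanCatch G s s n cops r}.Nonempty := by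
    refine ⟨Fintype.card V, (Fintype.equivFin V).symm, fun r => ⟨0, Fintype.equivFin V r, ?_⟩⟩
    simp
  exact Nat.sInf_le (hsub' (Nat.sInf_mem hne))
end

section
/- For every finite reflexive graph G and all positive integers k and s, c_{s,s}(G) ≥ c_{ks,ks}(G). -/
open SimpleGraph

variable {V : Type*}

lemma canCatch_zero {G : SimpleGraph V} {sc sr : ℕ} {K : ℕ} {C : Fin K → V} {r : V} :
    CanCatch G sc sr 0 C r ↔ ∃ i, C i = r := Iff.rfl

lemma canCatch_succ {G : SimpleGraph V} {sc sr : ℕ} {K : ℕ} {n : ℕ} {C : Fin K → V} {r : V} :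
    CanCatch G sc sr (n+1) C r ↔ (∃ i, C i = r) ∨
      ∃ C' : Fin K → V, (∀ i, copStep G sc (C i) (C' i)) ∧
        ((∃ i, C' i = r) ∨
          ∀ r', robberStep G sr {x | ∃ i, C' i = x} r r' → CanCatch G sc sr n C' r') := Iff.rfl

lemma canCatch_succ_of {G : SimpleGraph V} {sc sr K : ℕ} :
    ∀ {n : ℕ} {C : Fin K → V} {r : V}, CanCatch G sc sr n C r → CanCatch G sc sr (n+1) C r := by
  intro n
  induction n with
  | zero => intro C r h; exact Or.inl h
  | succ n ih =>
    intro C r h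
    rcases h with h | ⟨C', hst, h⟩
    · exact Or.inl h
    · exact Or.inr ⟨C', hst, h.imp id fun hall r' hm => ih (hall r' hm)⟩

lemma canCatch_mono {G : SimpleGraph V} {sc sr K : ℕ} {n m : ℕ} (hnm : n ≤ m)
    {C : Fin K → V} {r : V} (h : CanCatch G sc sr n C r) : CanCatch G sc sr m C r := by
  induction hnm with
  | refl => exact h
  | step _ ih => exact canCatch_succ_of ih

/-- Splitting a walk after (at most) `m` edges. -/
def wsplit {G : SimpleGraph V} : ∀ {u v : V} (_ : ℕ) (_ : G.Walk u v),
    Σ x : V, G.Walk u x × G.Walk x v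
  | u, _, 0, w => ⟨u, SimpleGraph.Walk.nil, w⟩
  | u, _, _+1, SimpleGraph.Walk.nil => ⟨u, SimpleGraph.Walk.nil, SimpleGraph.Walk.nil⟩
  | _, _, m+1, SimpleGraph.Walk.cons h p =>
    let t := wsplit m p
    ⟨t.1, SimpleGraph.Walk.cons h t.2.1, t.2.2⟩

lemma wsplit_take_length {G : SimpleGraph V} :
    ∀ {u v : V} (m : ℕ) (w : G.Walk u v), (wsplit m w).2.1.length = min m w.length
  | _, _, 0, w => by simp [wsplit]
  | _, _, m+1, SimpleGraph.Walk.nil => by simp [wsplit]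
  | _, _, m+1, SimpleGraph.Walk.cons h p => by
      simp [wsplit, wsplit_take_length m p, Nat.succ_min_succ]

lemma wsplit_length_add {G : SimpleGraph V} :
    ∀ {u v : V} (m : ℕ) (w : G.Walk u v),
      (wsplit m w).2.1.length + (wsplit m w).2.2.length = w.length
  | _, _, 0, w => by simp [wsplit]
  | _, _, m+1, SimpleGraph.Walk.nil => by simp [wsplit]
  | _, _, m+1, SimpleGraph.Walk.cons h p => by
      simp [wsplit, ← wsplit_length_add m p]; ring

lemma wsplit_take_support {G : SimpleGraph V} :
    ∀ {u v : V} (m : ℕ) (w : G.Walk u v) (x : V),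
      x ∈ (wsplit m w).2.1.support → x ∈ w.support
  | _, _, 0, w, x => by
      simp [wsplit]
      rintro rfl; exact w.start_mem_support
  | _, _, m+1, SimpleGraph.Walk.nil, x => by simp [wsplit]
  | u, _, m+1, SimpleGraph.Walk.cons h p, x => by
      simp only [wsplit, SimpleGraph.Walk.support_cons, List.mem_cons]
      rintro (rfl | hx)
      · exact Or.inl rfl
      · exact Or.inr (wsplit_take_support m p x hx)

lemma wsplit_take_tail {G : SimpleGraph V} :
    ∀ {u v : V} (m : ℕ) (w : G.Walk u v) (x : V),
      x ∈ (wsplit m w).2.1.support.tail → x ∈ w.support.tail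
  | _, _, 0, w, x => by simp [wsplit]
  | _, _, m+1, SimpleGraph.Walk.nil, x => by simp [wsplit]
  | u, _, m+1, SimpleGraph.Walk.cons h p, x => by
      simp only [wsplit, SimpleGraph.Walk.support_cons, List.tail_cons]
      exact wsplit_take_support m p x

/-- If some cop can reach `r'` by a walk of length at most its speed, the
configuration is not safe for the robber. -/
lemma safe_no_close {G : SimpleGraph V} {t K : ℕ} {A : Fin K → V} {r' : V}
    (hsafe : ∀ m, ¬ CanCatch G t t m A r') (i : Fin K)
    (w : G.Walk (A i) r') (hw : w.length ≤ t) : False := by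
  classical
  apply hsafe 1
  refine (canCatch_succ (n := 0)).mpr
    (Or.inr ⟨Function.update A i r', fun i' => ?_, Or.inl ⟨i, Function.update_self i r' A⟩⟩)
  rcases eq_or_ne i' i with rfl | hne
  · rw [Function.update_self]; exact ⟨w, hw⟩
  · rw [Function.update_of_ne hne]; exact ⟨SimpleGraph.Walk.nil, by simp⟩

/-- From a safe configuration, after any legal cop move there is a robber
response leading to a safe configuration. -/
lemma safe_step [Fintype V] {G : SimpleGraph V} {t K : ℕ} {A C' : Fin K → V} {r' : V}
    (hsafe : ∀ m, ¬ CanCatch G t t m A r')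
    (hstep : ∀ i, copStep G t (A i) (C' i)) :
    ∃ ρ₂, robberStep G t {x | ∃ i, C' i = x} r' ρ₂ ∧ ∀ m, ¬ CanCatch G t t m C' ρ₂ := by
  classical
  by_contra hcon
  push_neg at hcon
  have hcon' : ∀ ρ₂, robberStep G t {x | ∃ i, C' i = x} r' ρ₂ → ∃ m, CanCatch G t t m C' ρ₂ :=
    hcon
  set g : V → ℕ := fun ρ₂ =>
    if h : robberStep G t {x | ∃ i, C' i = x} r' ρ₂ then Classical.choose (hcon' ρ₂ h) else 0
    with hg
  set N : ℕ := Finset.univ.sup g with hN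
  apply hsafe (N+1)
  refine (canCatch_succ).mpr (Or.inr ⟨C', hstep, Or.inr fun ρ₂ hm => ?_⟩)
  have h1 : CanCatch G t t (g ρ₂) C' ρ₂ := by
    rw [hg]; simp only [dif_pos hm]
    exact Classical.choose_spec (hcon' ρ₂ hm)
  exact canCatch_mono (Finset.le_sup (Finset.mem_univ ρ₂)) h1

/-- Key lemma: if the robber has a globally safe anchor for the fast game,
the cops cannot catch it in the slow game. -/
lemma no_catch [Fintype V] {G : SimpleGraph V} {kk ss K : ℕ} (hk : 0 < kk) (hs : 0 < ss) :
    ∀ (n : ℕ) (C : Fin K → V) (ρ : V), CanCatch G ss ss n C ρ →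
    ∀ (A : Fin K → V) (r' : V) (j : ℕ) (P : G.Walk ρ r'),
    (∀ m, ¬ CanCatch G (kk*ss) (kk*ss) m A r') →
    (∀ i, ∃ w : G.Walk (A i) (C i), w.length ≤ j*ss) →
    (j+1)*ss + P.length ≤ kk*ss → False := by
  classical
  intro n
  induction n with
  | zero =>
    intro C ρ h A r' j P hsafe hAC hlen
    obtain ⟨i, hi⟩ := canCatch_zero.mp h
    obtain ⟨w, hw⟩ := hAC i
    refine safe_no_close hsafe i ((w.copy rfl hi).append P) ?_
    rw [SimpleGraph.Walk.length_append, SimpleGraph.Walk.length_copy]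
    have e : j*ss ≤ (j+1)*ss := Nat.mul_le_mul_right ss (by omega)
    linarith
  | succ n ih =>
    intro C ρ h A r' j P hsafe hAC hlen
    rcases canCatch_succ.mp h with hcap | ⟨C', hstep, hend⟩
    · obtain ⟨i, hi⟩ := hcap
      obtain ⟨w, hw⟩ := hAC i
      refine safe_no_close hsafe i ((w.copy rfl hi).append P) ?_
      rw [SimpleGraph.Walk.length_append, SimpleGraph.Walk.length_copy]
      have e : j*ss ≤ (j+1)*ss := Nat.mul_le_mul_right ss (by omega)
      linarith
    · have hAC' : ∀ i, ∃ w : G.Walk (A i) (C' i), w.length ≤ (j+1)*ss := by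
        intro i
        obtain ⟨w1, hw1⟩ := hAC i
        obtain ⟨w2, hw2⟩ := hstep i
        refine ⟨w1.append w2, ?_⟩
        rw [SimpleGraph.Walk.length_append]
        have e : (j+1)*ss = j*ss + ss := by ring
        linarith
      rcases hend with ⟨i, hi⟩ | hrec
      · obtain ⟨w, hw⟩ := hAC' i
        refine safe_no_close hsafe i ((w.copy rfl hi).append P) ?_
        rw [SimpleGraph.Walk.length_append, SimpleGraph.Walk.length_copy]
        linarith
      · by_cases hP : P.length = 0
        · -- the robber is at the anchor vertex: re-anchor
          have hρ : ρ = r' := by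
            cases P with
            | nil => rfl
            | cons h p => simp at hP
          subst hρ
          have hbig : ∀ i, copStep G (kk*ss) (A i) (C' i) := by
            intro i
            obtain ⟨w, hw⟩ := hAC' i
            exact ⟨w, by linarith⟩
          obtain ⟨ρ₂, ⟨W2, hW2len, hW2avoid⟩, hsafe2⟩ := safe_step hsafe hbig
          have hmove : robberStep G ss {x | ∃ i, C' i = x} ρ (wsplit ss W2).1 :=
            ⟨(wsplit ss W2).2.1,
              by rw [wsplit_take_length]; exact min_le_left _ _,
              fun x hx => hW2avoid x (wsplit_take_tail ss W2 x hx)⟩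
          refine ih C' (wsplit ss W2).1 (hrec _ hmove) C' ρ₂ 0 (wsplit ss W2).2.2 hsafe2
            (fun i => ⟨SimpleGraph.Walk.nil, by simp⟩) ?_
          have h1 := wsplit_take_length ss W2
          have h2 := wsplit_length_add ss W2
          have hss : ss ≤ kk*ss := by
            calc ss = 1*ss := (one_mul ss).symm
            _ ≤ kk*ss := Nat.mul_le_mul_right ss hk
          rcases le_total ss W2.length with hle | hle
          · rw [min_eq_left hle] at h1
            have : (0+1)*ss = ss := by ring
            omega
          · rw [min_eq_right hle] at h1
            have : (0+1)*ss = ss := by ring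
            omega
        · -- the robber walks along P
          have hTsup : ∀ x ∈ (wsplit ss P).2.1.support.tail, x ∉ {x | ∃ i, C' i = x} := by
            rintro x hx ⟨i, hix⟩
            have hxP : x ∈ P.support :=
              List.tail_subset _ (wsplit_take_tail ss P x hx)
            obtain ⟨w, hw⟩ := hAC' i
            refine safe_no_close hsafe i ((w.copy rfl hix).append (P.dropUntil x hxP)) ?_
            rw [SimpleGraph.Walk.length_append, SimpleGraph.Walk.length_copy]
            have hd := SimpleGraph.Walk.length_dropUntil_le P hxP
            linarith
          have hmove : robberStep G ss {x | ∃ i, C' i = x} ρ (wsplit ss P).1 :=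
            ⟨(wsplit ss P).2.1,
              by rw [wsplit_take_length]; exact min_le_left _ _, hTsup⟩
          refine ih C' (wsplit ss P).1 (hrec _ hmove) A r' (j+1) (wsplit ss P).2.2 hsafe hAC' ?_
          have h1 := wsplit_take_length ss P
          have h2 := wsplit_length_add ss P
          rcases le_or_gt ss P.length with hle | hlt
          · rw [min_eq_left hle] at h1
            have e : (j+1+1)*ss = (j+1)*ss + ss := by ring
            omega
          · rw [min_eq_right hlt.le] at h1
            have hdrop : (wsplit ss P).2.2.length = 0 := by omega
            have hPpos : 1 ≤ P.length := Nat.one_le_iff_ne_zero.mpr hP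
            have hjk : (j+1)*ss < kk*ss := by omega
            have hjk' : j+1 < kk := lt_of_mul_lt_mul_right hjk (Nat.zero_le ss)
            have : (j+1+1)*ss ≤ kk*ss := Nat.mul_le_mul_right ss (by omega)
            omega

/-- For every finite (reflexive) graph `G` and positive integers `k` and `s`,
`c_{s,s}(G) ≥ c_{ks,ks}(G)`. -/
theorem statement7 [Fintype V] (G : SimpleGraph V) (k s : ℕ) (hk : 0 < k) (hs : 0 < s) :
    copNumber G (k * s) (k * s) ≤ copNumber G s s := by
  classical
  have hne : {K : ℕ | ∃ cops : Fin K → V, ∀ r : V, ∃ n, CanCatch G s s n cops r}.Nonempty := by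
    refine ⟨Fintype.card V, fun i => (Fintype.equivFin V).symm i, fun r => ⟨0, ⟨Fintype.equivFin V r, by simp⟩⟩⟩
  obtain ⟨cops, hcops⟩ := Nat.sInf_mem hne
  apply Nat.sInf_le
  refine ⟨cops, fun r => ?_⟩
  by_contra hno
  push_neg at hno
  obtain ⟨n, hc⟩ := hcops r
  refine no_catch hk hs n cops r hc cops r 0 SimpleGraph.Walk.nil hno
    (fun i => ⟨SimpleGraph.Walk.nil, by simp⟩) ?_
  have hss : s ≤ k*s := by
    calc s = 1*s := (one_mul s).symm
    _ ≤ k*s := Nat.mul_le_mul_right s hk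
  simpa using hss
end

section
/- Fix positive integers k and s, and let G be the k-fold strong product of the cycle C_{2s+2} with itself. Then for every positive integer s', the speed-(s',s') cop number of G equals k+1 if s' ≤ s, and equals 1 if s' > s. -/
open SimpleGraph

variable {V : Type*}

/-- The cycle `C_n` on `n` vertices (for `n ≥ 3`), realized on `ZMod n`. -/
def cycleG (n : ℕ) : SimpleGraph (ZMod n) where
  Adj x y := x ≠ y ∧ (x - y = 1 ∨ y - x = 1)
  symm := by constructor; rintro x y ⟨h, h'⟩; exact ⟨h.symm, h'.symm⟩
  loopless := by constructor; rintro x ⟨h, -⟩; exact h rfl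

/-- The `k`-fold strong product of the cycle `C_n` with itself. -/
def strongPowerCycle (n k : ℕ) : SimpleGraph (Fin k → ZMod n) where
  Adj x y := x ≠ y ∧ ∀ i, x i = y i ∨ (cycleG n).Adj (x i) (y i)
  symm := by
    constructor
    rintro x y ⟨h, h'⟩
    refine ⟨h.symm, fun i => ?_⟩
    rcases h' i with h'' | h''
    · exact Or.inl h''.symm
    · exact Or.inr h''.symm
  loopless := by constructor; rintro x ⟨h, -⟩; exact h rfl

set_option linter.unusedSectionVars false

namespace CR

variable {n : ℕ} [NeZero n]

/-- cyclic distance on ZMod n -/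
def cd (a b : ZMod n) : ℕ := min ((a - b).val) ((b - a).val)

lemma cd_def' (a b : ZMod n) : cd a b = min ((a - b).val) (n - (a - b).val) := by
  unfold cd
  by_cases h : a - b = 0
  · have hb : b - a = 0 := by rw [← neg_sub]; simp [h]
    simp [h, hb]
  · have : b - a = -(a - b) := by ring
    rw [this, ZMod.neg_val, if_neg h]

lemma cd_comm (a b : ZMod n) : cd a b = cd b a := by unfold cd; omega

lemma cd_self (a : ZMod n) : cd a a = 0 := by simp [cd]

lemma cd_lt (a b : ZMod n) : cd a b < n := by
  have := ZMod.val_lt (a - b)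
  unfold cd; omega

lemma cd_eq_zero {a b : ZMod n} (h : cd a b = 0) : a = b := by
  rw [cd_def'] at h
  have hn := NeZero.pos n
  have hlt := ZMod.val_lt (a - b)
  have : (a - b).val = 0 := by omega
  have : a - b = 0 := by
    have := (ZMod.val_eq_zero (a - b)).mp this
    exact this
  linear_combination this

lemma cd_zero_iff {a b : ZMod n} : cd a b = 0 ↔ a = b := by
  constructor
  · exact cd_eq_zero
  · rintro rfl; exact cd_self a

private lemma mod_cases3 (N X : ℕ) (h : 0 < N) (hX : X < 3 * N) :
    X % N = X ∨ X % N + N = X ∨ X % N + 2 * N = X := by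
  have h1 : X % N + N * (X / N) = X := Nat.mod_add_div X N
  have h2 : X % N < N := Nat.mod_lt _ h
  have h3 : X / N < 3 := by
    by_contra hq
    push_neg at hq
    have : N * 3 ≤ N * (X / N) := Nat.mul_le_mul_left N hq
    omega
  interval_cases (X / N) <;> omega

lemma cd_triangle (a b c : ZMod n) : cd a c ≤ cd a b + cd b c := by
  have hn := NeZero.pos n
  have h1 : a - c = (a - b) + (b - c) := by ring
  have h2 : ((a - b) + (b - c)).val = ((a - b).val + (b - c).val) % n := ZMod.val_add _ _
  rw [cd_def', cd_def', cd_def', h1, h2]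
  have l1 := ZMod.val_lt (a - b)
  have l2 := ZMod.val_lt (b - c)
  have := mod_cases3 n ((a - b).val + (b - c).val) hn (by omega)
  have := Nat.mod_lt ((a - b).val + (b - c).val) hn
  omega

/-- translation invariance -/
lemma cd_add_right (a b c : ZMod n) : cd (a + c) (b + c) = cd a b := by
  unfold cd
  have h1 : a + c - (b + c) = a - b := by ring
  have h2 : b + c - (a + c) = b - a := by ring
  rw [h1, h2]

lemma cd_le_of_adj {a b : ZMod n} (h : a - b = 1 ∨ b - a = 1) : cd a b ≤ 1 := by
  have hn := NeZero.pos n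
  rcases Nat.lt_or_ge 1 n with h1 | h1
  · have hv : (1 : ZMod n).val = 1 := ZMod.val_one'' (by omega)
    rcases h with h | h
    · have : cd a b ≤ (a - b).val := min_le_left _ _
      rw [h, hv] at this; exact this
    · have : cd a b ≤ (b - a).val := min_le_right _ _
      rw [h, hv] at this; exact this
  · have := cd_lt a b
    omega

end CR

namespace CR
variable {n : ℕ} [NeZero n]

lemma one_ne_zero' (hn2 : 2 ≤ n) : (1 : ZMod n) ≠ 0 := by
  intro h
  have := ZMod.val_one'' (n := n) (by omega)
  rw [h] at this
  simp at this

/-- step one vertex from `a` towards `b` along a shortest arc -/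
def stp (a b : ZMod n) : ZMod n :=
  if a = b then a else if (b - a).val ≤ n / 2 then a + 1 else a - 1

lemma stp_spec (hn2 : 2 ≤ n) {a b : ZMod n} (hab : a ≠ b) :
    stp a b ≠ a ∧ (stp a b - a = 1 ∨ a - stp a b = 1) ∧ cd (stp a b) b + 1 ≤ cd a b := by
  have h1 : (1 : ZMod n) ≠ 0 := one_ne_zero' hn2
  have hv1 : (1 : ZMod n).val = 1 := ZMod.val_one'' (by omega)
  have hba : b - a ≠ 0 := sub_ne_zero.mpr (Ne.symm hab)
  set t := (b - a).val with ht
  have ht1 : 1 ≤ t := by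
    have := ZMod.val_ne_zero (b - a)
    have := this.mpr hba
    omega
  have htn : t < n := ZMod.val_lt _
  have hcdab : cd a b = min t (n - t) := by
    rw [cd_comm, cd_def']
  unfold stp
  rw [if_neg hab]
  by_cases hc : t ≤ n / 2
  · rw [if_pos hc]
    refine ⟨?_, Or.inl (by ring), ?_⟩
    · intro h
      have : (1 : ZMod n) = 0 := by linear_combination h
      exact h1 this
    · have hd : b - (a + 1) = (b - a) + (-1) := by ring
      have hneg : ((-1 : ZMod n)).val = n - 1 := by
        rw [ZMod.neg_val, if_neg h1, hv1]
      have hval : (b - (a + 1)).val = (t + (n - 1)) % n := by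
        rw [hd, ZMod.val_add, hneg]
      have hmod : (t + (n - 1)) % n = t - 1 := by
        have := mod_cases3 n (t + (n - 1)) (by omega) (by omega)
        have := Nat.mod_lt (t + (n - 1)) (y := n) (by omega)
        omega
      have : cd (a + 1) b = min (t - 1) (n - (t - 1)) := by
        rw [cd_comm, cd_def', hval, hmod]
      rw [this, hcdab]
      have h2t : 2 * t ≤ n := by omega
      omega
  · rw [if_neg hc]
    refine ⟨?_, Or.inr (by ring), ?_⟩
    · intro h
      have : (1 : ZMod n) = 0 := by linear_combination -h
      exact h1 this
    · have hd : b - (a - 1) = (b - a) + 1 := by ring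
      have hval : (b - (a - 1)).val = (t + 1) % n := by
        rw [hd, ZMod.val_add, hv1]
      have h2t : n < 2 * t := by omega
      rcases Nat.eq_or_lt_of_le (show t + 1 ≤ n by omega) with he | he
      · have hmod : (t + 1) % n = 0 := by rw [he, Nat.mod_self]
        have : cd (a - 1) b = min 0 (n - 0) := by
          rw [cd_comm, cd_def', hval, hmod]
        rw [this, hcdab]
        omega
      · have hmod : (t + 1) % n = t + 1 := Nat.mod_eq_of_lt he
        have : cd (a - 1) b = min (t + 1) (n - (t + 1)) := by
          rw [cd_comm, cd_def', hval, hmod]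
        rw [this, hcdab]
        omega

variable {k : ℕ}

lemma cd_adj {a b : ZMod n} (h : (cycleG n).Adj a b) : cd a b ≤ 1 :=
  cd_le_of_adj h.2

/-- walk length bounds coordinate distances -/
lemma walk_cd_le {u v : Fin k → ZMod n} (p : (strongPowerCycle n k).Walk u v) (i : Fin k) :
    cd (u i) (v i) ≤ p.length := by
  induction p with
  | nil => simp [cd_self]
  | cons h p ih =>
    rename_i a b c
    have h1 : cd (a i) (b i) ≤ 1 := by
      rcases h.2 i with h' | h'
      · rw [h']; simp [cd_self]
      · exact cd_adj h'
    calc cd (a i) (c i) ≤ cd (a i) (b i) + cd (b i) (c i) := cd_triangle _ _ _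
      _ ≤ 1 + p.length := by have := ih; omega
      _ = (SimpleGraph.Walk.cons h p).length := by simp [SimpleGraph.Walk.length_cons]; omega

/-- construct a walk realizing coordinatewise distances, staying on shortest arcs -/
lemma walk_exists (hn2 : 2 ≤ n) :
    ∀ (m : ℕ) (u v : Fin k → ZMod n), (∀ i, cd (u i) (v i) ≤ m) →
    ∃ p : (strongPowerCycle n k).Walk u v, p.length ≤ m ∧
      ∀ x ∈ p.support, ∀ i, cd (x i) (v i) ≤ cd (u i) (v i) := by
  intro m
  induction m with
  | zero =>
    intro u v h
    have : u = v := funext fun i => cd_eq_zero (Nat.le_zero.mp (h i))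
    subst this
    exact ⟨SimpleGraph.Walk.nil, by simp, by simp⟩
  | succ m ih =>
    intro u v h
    by_cases huv : u = v
    · subst huv
      exact ⟨SimpleGraph.Walk.nil, by simp, by simp⟩
    · set u₁ : Fin k → ZMod n := fun i => stp (u i) (v i) with hu₁
      have hstep : ∀ i, u i ≠ v i → stp (u i) (v i) ≠ u i ∧
          (stp (u i) (v i) - u i = 1 ∨ u i - stp (u i) (v i) = 1) ∧
          cd (stp (u i) (v i)) (v i) + 1 ≤ cd (u i) (v i) := fun i hi => stp_spec hn2 hi
      have heq : ∀ i, u i = v i → u₁ i = u i := by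
        intro i hi; simp [hu₁, stp, hi]
      have hmono : ∀ i, cd (u₁ i) (v i) ≤ cd (u i) (v i) := by
        intro i
        by_cases hi : u i = v i
        · rw [heq i hi]
        · show cd (stp (u i) (v i)) (v i) ≤ _
          have := (hstep i hi).2.2; omega
      have hle : ∀ i, cd (u₁ i) (v i) ≤ m := by
        intro i
        by_cases hi : u i = v i
        · rw [heq i hi, hi, cd_self]; omega
        · show cd (stp (u i) (v i)) (v i) ≤ m
          have := (hstep i hi).2.2
          have := h i
          omega
      have hadj : (strongPowerCycle n k).Adj u u₁ := by
        constructor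
        · intro hequ
          apply huv
          funext i
          by_cases hi : u i = v i
          · exact hi
          · exfalso
            exact (hstep i hi).1 (congrFun hequ i).symm
        · intro i
          by_cases hi : u i = v i
          · exact Or.inl (heq i hi).symm
          · refine Or.inr ⟨Ne.symm ((hstep i hi).1), ?_⟩
            rcases (hstep i hi).2.1 with h' | h'
            · exact Or.inr h'
            · exact Or.inl h'
      obtain ⟨p, hp1, hp2⟩ := ih u₁ v hle
      refine ⟨SimpleGraph.Walk.cons hadj p, by simp [SimpleGraph.Walk.length_cons]; omega, ?_⟩
      intro x hx i
      rcases List.mem_cons.mp (by simpa using hx) with h' | h'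
      · subst h'; exact le_refl _
      · exact le_trans (hp2 x (by simpa using h') i) (hmono i)

lemma copStep_iff (hn2 : 2 ≤ n) (s' : ℕ) (u v : Fin k → ZMod n) :
    copStep (strongPowerCycle n k) s' u v ↔ ∀ i, cd (u i) (v i) ≤ s' := by
  constructor
  · rintro ⟨p, hp⟩ i
    exact le_trans (walk_cd_le p i) hp
  · intro h
    obtain ⟨p, hp1, _⟩ := walk_exists hn2 s' u v h
    exact ⟨p, hp1⟩

lemma robberStep_cd {s' : ℕ} {S : Set (Fin k → ZMod n)} {u v : Fin k → ZMod n}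
    (h : robberStep (strongPowerCycle n k) s' S u v) : ∀ i, cd (u i) (v i) ≤ s' := by
  obtain ⟨p, hp, -⟩ := h
  exact fun i => le_trans (walk_cd_le p i) hp

lemma robberStep_exists (hn2 : 2 ≤ n) {s' : ℕ} {S : Set (Fin k → ZMod n)}
    {u v : Fin k → ZMod n} (hd : ∀ i, cd (u i) (v i) ≤ s')
    (hS : ∀ x : Fin k → ZMod n, (∀ i, cd (x i) (v i) ≤ s') → x ∉ S) :
    robberStep (strongPowerCycle n k) s' S u v := by
  obtain ⟨p, hp1, hp2⟩ := walk_exists hn2 s' u v hd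
  refine ⟨p, hp1, ?_⟩
  intro x hx
  have hxs : x ∈ p.support := List.mem_of_mem_tail hx
  exact hS x (fun i => le_trans (hp2 x hxs i) (hd i))

end CR

namespace CR
open Classical in
/-- cops can force, within `n` rounds, either a capture or a configuration
(at a cop-turn) satisfying `P`. -/
def CanForce (G : SimpleGraph V) (sc sr : ℕ) {m : ℕ} (P : (Fin m → V) → V → Prop) :
    ℕ → (Fin m → V) → V → Prop
  | 0, cops, r => P cops r
  | n + 1, cops, r => P cops r ∨
      ∃ cops' : Fin m → V, (∀ i, copStep G sc (cops i) (cops' i)) ∧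
        ((∃ i, cops' i = r) ∨
          ∀ r', robberStep G sr {x | ∃ i, cops' i = x} r r' →
            CanForce G sc sr P n cops' r')

variable {G : SimpleGraph V} {sc sr : ℕ} {m : ℕ}

lemma CanForce.mono_P {P Q : (Fin m → V) → V → Prop} (h : ∀ c r, P c r → Q c r) :
    ∀ {n c r}, CanForce G sc sr P n c r → CanForce G sc sr Q n c r := by
  intro n
  induction n with
  | zero => intro c r hc; exact h _ _ hc
  | succ n ih =>
    intro c r hc
    rcases hc with hc | ⟨c', hstep, hc⟩
    · exact Or.inl (h _ _ hc)
    · refine Or.inr ⟨c', hstep, ?_⟩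
      rcases hc with hc | hc
      · exact Or.inl hc
      · exact Or.inr fun r' hr => ih (hc r' hr)

lemma CanForce.mono_n {P : (Fin m → V) → V → Prop} :
    ∀ {n n' c r}, n ≤ n' → CanForce G sc sr P n c r → CanForce G sc sr P n' c r := by
  have step : ∀ {n c r}, CanForce G sc sr P n c r → CanForce G sc sr P (n + 1) c r := by
    intro n
    induction n with
    | zero => intro c r hc; exact Or.inl hc
    | succ n ih =>
      intro c r hc
      rcases hc with hc | ⟨c', hstep, hc⟩
      · exact Or.inl hc
      · refine Or.inr ⟨c', hstep, ?_⟩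
        rcases hc with hc | hc
        · exact Or.inl hc
        · exact Or.inr fun r' hr => ih (hc r' hr)
  intro n n' c r hle h
  induction hle with
  | refl => exact h
  | step _ ih => exact step ih

lemma CanForce.toCanCatch :
    ∀ {n : ℕ} {c : Fin m → V} {r : V},
      CanForce G sc sr (fun c r => ∃ i, c i = r) n c r → CanCatch G sc sr n c r := by
  intro n
  induction n with
  | zero => intro c r h; exact h
  | succ n ih =>
    intro c r h
    rcases h with h | ⟨c', hstep, h⟩
    · exact Or.inl h
    · refine Or.inr ⟨c', hstep, ?_⟩
      rcases h with h | h
      · exact Or.inl h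
      · exact Or.inr fun r' hr => ih (h r' hr)

lemma CanForce.bind [Fintype V] {P Q : (Fin m → V) → V → Prop} :
    ∀ {n c r}, CanForce G sc sr P n c r →
      (∀ c r, P c r → ∃ n', CanForce G sc sr Q n' c r) →
      ∃ n', CanForce G sc sr Q n' c r := by
  intro n
  induction n with
  | zero => intro c r h hPQ; exact hPQ _ _ h
  | succ n ih =>
    intro c r h hPQ
    rcases h with h | ⟨c', hstep, h⟩
    · exact hPQ _ _ h
    · rcases h with h | h
      · exact ⟨1, Or.inr ⟨c', hstep, Or.inl h⟩⟩
      · have h' : ∀ r' : V, ∃ n', robberStep G sr {x | ∃ i, c' i = x} r r' →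
            CanForce G sc sr Q n' c' r' := by
          intro r'
          by_cases hr : robberStep G sr {x | ∃ i, c' i = x} r r'
          · obtain ⟨n', hn'⟩ := ih (h r' hr) hPQ
            exact ⟨n', fun _ => hn'⟩
          · exact ⟨0, fun hc => absurd hc hr⟩
        choose f hf using h'
        classical
        refine ⟨(Finset.univ.sup f) + 1, Or.inr ⟨c', hstep, Or.inr fun r' hr => ?_⟩⟩
        exact CanForce.mono_n (Finset.le_sup (Finset.mem_univ r')) (hf r' hr)

end CR

namespace CR
lemma keyArith (n s' u v E F u' v' Φ : ℕ)
    (hn : 2 * s' + 2 ≤ n) (hs' : 1 ≤ s')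
    (hu : s' + 1 ≤ u) (hu2 : u + s' + 1 ≤ n)
    (hv : s' + 1 ≤ v) (hv2 : v + s' + 1 ≤ n)
    (hE : E < n) (hEF : (E = 0 ∧ F = 0) ∨ F = n - E)
    (hEd : E ≤ s' ∨ n - E ≤ s')
    (hu' : u' = (u + E + (n - s')) % n)
    (hv' : v' = (v + F + (n - s')) % n)
    (hΦ : u + v ≤ Φ) :
    (u' ≤ s' ∨ n - u' ≤ s') ∨ (v' ≤ s' ∨ n - v' ≤ s') ∨ u' + v' + 1 ≤ Φ := by
  have c1 := mod_cases3 n (u + E + (n - s')) (by omega) (by omega)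
  have c2 := mod_cases3 n (v + F + (n - s')) (by omega) (by omega)
  have l1 : (u + E + (n - s')) % n < n := Nat.mod_lt _ (by omega)
  have l2 : (v + F + (n - s')) % n < n := Nat.mod_lt _ (by omega)
  subst hu' hv'
  omega


end CR

namespace CR
open SimpleGraph

variable {n k m : ℕ} [NeZero n]

/-- cop `A` is within distance `s'` of the robber in every coordinate of `T`. -/
def Close (s' : ℕ) (T : Finset (Fin k)) (A : Fin m)
    (c : Fin m → (Fin k → ZMod n)) (r : Fin k → ZMod n) : Prop :=
  ∀ i ∈ T, cd (c A i) (r i) ≤ s'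

lemma CanForce_zero {G : SimpleGraph (Fin k → ZMod n)} {s' : ℕ}
    {P : (Fin m → (Fin k → ZMod n)) → (Fin k → ZMod n) → Prop} {c r} :
    CanForce G s' s' P 0 c r ↔ P c r := Iff.rfl

variable {s' : ℕ}

lemma val_nat_s' (hn : 2 * s' + 2 ≤ n) : ((s' : ZMod n)).val = s' :=
  ZMod.val_cast_of_lt (by omega)

lemma cd_add_shift (hn : 2 * s' + 2 ≤ n) (a : ZMod n) : cd a (a + (s' : ZMod n)) ≤ s' := by
  have : (a + (s' : ZMod n)) - a = (s' : ZMod n) := by ring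
  calc cd a (a + (s' : ZMod n)) ≤ ((a + (s' : ZMod n)) - a).val := min_le_right _ _
    _ = s' := by rw [this, val_nat_s' hn]

lemma cd_sub_shift (hn : 2 * s' + 2 ≤ n) (a : ZMod n) : cd a (a - (s' : ZMod n)) ≤ s' := by
  have : a - (a - (s' : ZMod n)) = (s' : ZMod n) := by ring
  calc cd a (a - (s' : ZMod n)) ≤ (a - (a - (s' : ZMod n))).val := min_le_left _ _
    _ = s' := by rw [this, val_nat_s' hn]

/-- If free cop `A` is `T'`-close and `t`-close, it can become `insert t T'`-close
in one round, while all maintained sets stay close. -/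
lemma catch_step (hn : 2 * s' + 2 ≤ n) (hs'1 : 1 ≤ s')
    (mt : Fin m → Finset (Fin k)) (A : Fin m) (hA : mt A = ∅)
    (T' : Finset (Fin k)) (t : Fin k)
    (c : Fin m → (Fin k → ZMod n)) (r : Fin k → ZMod n)
    (hclose : ∀ B, Close s' (mt B) B c r)
    (hT' : Close s' T' A c r) (ht : cd (c A t) (r t) ≤ s') :
    CanForce (strongPowerCycle n k) s' s'
      (fun c r => (∀ B, Close s' (mt B) B c r) ∧ Close s' (insert t T') A c r) 1 c r := by
  classical
  set c' : Fin m → (Fin k → ZMod n) := fun B =>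
    if B = A then (fun i => if i = t then r t else if i ∈ T' then r i else c A i)
    else (fun i => if i ∈ mt B then r i else c B i) with hc'
  have hcA : ∀ i, c' A i = if i = t then r t else if i ∈ T' then r i else c A i := by
    intro i; rw [hc']; simp
  have hcB : ∀ B, B ≠ A → ∀ i, c' B i = if i ∈ mt B then r i else c B i := by
    intro B hB i; rw [hc']; simp [hB]
  refine Or.inr ⟨c', fun B => ?_, Or.inr fun r' hr' => ?_⟩
  · rw [copStep_iff (by omega)]
    intro i
    by_cases hBA : B = A
    · subst hBA
      rw [hcA]
      by_cases hit : i = t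
      · subst hit; rw [if_pos rfl]; exact ht
      · rw [if_neg hit]
        by_cases hiT : i ∈ T'
        · rw [if_pos hiT]; exact hT' i hiT
        · rw [if_neg hiT]; simp [cd_self]
    · rw [hcB B hBA]
      by_cases hiB : i ∈ mt B
      · rw [if_pos hiB]; exact hclose B i hiB
      · rw [if_neg hiB]; simp [cd_self]
  · have hrel := robberStep_cd hr'
    rw [CanForce_zero]
    constructor
    · intro B i hiB
      by_cases hBA : B = A
      · subst hBA; rw [hA] at hiB; simp at hiB
      · rw [hcB B hBA, if_pos hiB]
        exact hrel i
    · intro i hiT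
      by_cases hit : i = t
      · subst hit; rw [hcA, if_pos rfl]; exact hrel _
      · have h : i ∈ T' := by
          rcases Finset.mem_insert.mp hiT with h | h
          · exact absurd h hit
          · exact h
        rw [hcA, if_neg hit, if_pos h]
        exact hrel i

end CR

namespace CR
open SimpleGraph

variable {n k m : ℕ} [NeZero n] {s' : ℕ}

/-- Two free cops, both `T'`-close, can squeeze the robber in coordinate `t`,
until one of them becomes `insert t T'`-close. -/
lemma squeeze (hn : 2 * s' + 2 ≤ n) (hs'1 : 1 ≤ s')
    (mt : Fin m → Finset (Fin k)) (A₁ A₂ : Fin m) (hA12 : A₁ ≠ A₂)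
    (hm1 : mt A₁ = ∅) (hm2 : mt A₂ = ∅)
    (T' : Finset (Fin k)) (t : Fin k) (htT : t ∉ T') :
    ∀ (Φ : ℕ) (c : Fin m → (Fin k → ZMod n)) (r : Fin k → ZMod n),
      (∀ B, Close s' (mt B) B c r) → Close s' T' A₁ c r → Close s' T' A₂ c r →
      (cd (c A₁ t) (r t) ≤ s' ∨ cd (c A₂ t) (r t) ≤ s' ∨
        (r t - c A₁ t).val + (c A₂ t - r t).val ≤ Φ) →
      ∃ nn, CanForce (strongPowerCycle n k) s' s'
        (fun c r => (∀ B, Close s' (mt B) B c r) ∧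
          (Close s' (insert t T') A₁ c r ∨ Close s' (insert t T') A₂ c r)) nn c r := by
  classical
  intro Φ
  induction Φ using Nat.strong_induction_on with
  | _ Φ IH =>
  intro c r hcl h1 h2 hd
  by_cases hc1 : cd (c A₁ t) (r t) ≤ s'
  · exact ⟨1, CanForce.mono_P (fun c r h => ⟨h.1, Or.inl h.2⟩)
      (catch_step hn hs'1 mt A₁ hm1 T' t c r hcl h1 hc1)⟩
  by_cases hc2 : cd (c A₂ t) (r t) ≤ s'
  · exact ⟨1, CanForce.mono_P (fun c r h => ⟨h.1, Or.inr h.2⟩)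
      (catch_step hn hs'1 mt A₂ hm2 T' t c r hcl h2 hc2)⟩
  -- shrink case
  have hΦ : (r t - c A₁ t).val + (c A₂ t - r t).val ≤ Φ := by tauto
  set u := (r t - c A₁ t).val with hu_def
  set v := (c A₂ t - r t).val with hv_def
  have hcd1 : cd (c A₁ t) (r t) = min u (n - u) := by rw [cd_comm, cd_def']
  have hcd2 : cd (c A₂ t) (r t) = min v (n - v) := by rw [cd_def']
  have hu1 : s' + 1 ≤ u := by omega
  have hu2 : u + s' + 1 ≤ n := by
    have := ZMod.val_lt (r t - c A₁ t)
    omega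
  have hv1 : s' + 1 ≤ v := by omega
  have hv2 : v + s' + 1 ≤ n := by
    have := ZMod.val_lt (c A₂ t - r t)
    omega
  have hs'ne : (s' : ZMod n) ≠ 0 := by
    intro h
    have := val_nat_s' (n := n) hn
    rw [h, ZMod.val_zero] at this
    omega
  have hnegval : (-(s' : ZMod n)).val = n - s' := by
    rw [ZMod.neg_val, if_neg hs'ne, val_nat_s' hn]
  set c' : Fin m → (Fin k → ZMod n) := fun B =>
    if B = A₁ then (fun i => if i = t then c A₁ t + (s' : ZMod n)
                             else if i ∈ T' then r i else c A₁ i)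
    else if B = A₂ then (fun i => if i = t then c A₂ t - (s' : ZMod n)
                                  else if i ∈ T' then r i else c A₂ i)
    else (fun i => if i ∈ mt B then r i else c B i) with hc'
  have e1 : ∀ i, c' A₁ i = if i = t then c A₁ t + (s' : ZMod n)
      else if i ∈ T' then r i else c A₁ i := by intro i; rw [hc']; simp
  have e2 : ∀ i, c' A₂ i = if i = t then c A₂ t - (s' : ZMod n)
      else if i ∈ T' then r i else c A₂ i := by
    intro i; rw [hc']; simp [Ne.symm hA12]
  have e3 : ∀ B, B ≠ A₁ → B ≠ A₂ → ∀ i, c' B i = if i ∈ mt B then r i else c B i := by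
    intro B hB1 hB2 i; rw [hc']; simp [hB1, hB2]
  have hstep : ∀ B, copStep (strongPowerCycle n k) s' (c B) (c' B) := by
    intro B
    rw [copStep_iff (by omega)]
    intro i
    by_cases hB1 : B = A₁
    · subst hB1
      rw [e1]
      by_cases hit : i = t
      · subst hit; rw [if_pos rfl]; exact cd_add_shift hn _
      · rw [if_neg hit]
        by_cases hiT : i ∈ T'
        · rw [if_pos hiT]; exact h1 i hiT
        · rw [if_neg hiT]; simp [cd_self]
    · by_cases hB2 : B = A₂
      · subst hB2
        rw [e2]
        by_cases hit : i = t
        · subst hit; rw [if_pos rfl]; exact cd_sub_shift hn _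
        · rw [if_neg hit]
          by_cases hiT : i ∈ T'
          · rw [if_pos hiT]; exact h2 i hiT
          · rw [if_neg hiT]; simp [cd_self]
      · rw [e3 B hB1 hB2]
        by_cases hiB : i ∈ mt B
        · rw [if_pos hiB]; exact hcl B i hiB
        · rw [if_neg hiB]; simp [cd_self]
  have step1 : CanForce (strongPowerCycle n k) s' s'
      (fun c r => (∀ B, Close s' (mt B) B c r) ∧ Close s' T' A₁ c r ∧ Close s' T' A₂ c r ∧
        (cd (c A₁ t) (r t) ≤ s' ∨ cd (c A₂ t) (r t) ≤ s' ∨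
          (r t - c A₁ t).val + (c A₂ t - r t).val ≤ Φ - 1)) 1 c r := by
    refine Or.inr ⟨c', hstep, Or.inr fun r' hr' => ?_⟩
    have hrel := robberStep_cd hr'
    rw [CanForce_zero]
    have hclB : ∀ B, Close s' (mt B) B c' r' := by
      intro B i hiB
      by_cases hB1 : B = A₁
      · subst hB1; rw [hm1] at hiB; simp at hiB
      · by_cases hB2 : B = A₂
        · subst hB2; rw [hm2] at hiB; simp at hiB
        · rw [e3 B hB1 hB2, if_pos hiB]; exact hrel i
    have hT1 : Close s' T' A₁ c' r' := by
      intro i hiT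
      have hit : i ≠ t := by rintro rfl; exact htT hiT
      rw [e1, if_neg hit, if_pos hiT]; exact hrel i
    have hT2 : Close s' T' A₂ c' r' := by
      intro i hiT
      have hit : i ≠ t := by rintro rfl; exact htT hiT
      rw [e2, if_neg hit, if_pos hiT]; exact hrel i
    refine ⟨hclB, hT1, hT2, ?_⟩
    -- the potential argument
    set E := (r' t - r t).val with hE_def
    set F := (r t - r' t).val with hF_def
    have hEn : E < n := ZMod.val_lt _
    have hEd : E ≤ s' ∨ n - E ≤ s' := by
      have h := hrel t
      have : cd (r t) (r' t) = min E (n - E) := by rw [cd_comm, cd_def']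
      omega
    have hEF : (E = 0 ∧ F = 0) ∨ F = n - E := by
      by_cases h0 : r' t = r t
      · left
        constructor
        · rw [hE_def, h0, sub_self, ZMod.val_zero]
        · rw [hF_def, h0, sub_self, ZMod.val_zero]
      · right
        have : r t - r' t = -(r' t - r t) := by ring
        rw [hF_def, this, ZMod.neg_val, if_neg (sub_ne_zero.mpr h0)]
    have eA1t : c' A₁ t = c A₁ t + (s' : ZMod n) := by rw [e1]; simp
    have eA2t : c' A₂ t = c A₂ t - (s' : ZMod n) := by rw [e2]; simp
    have hu'val : (r' t - c' A₁ t).val = (u + E + (n - s')) % n := by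
      have hx : r' t - c' A₁ t = ((r t - c A₁ t) + (r' t - r t)) + (-(s' : ZMod n)) := by
        rw [eA1t]; ring
      rw [hx, ZMod.val_add, ZMod.val_add, hnegval, ← hu_def, ← hE_def, Nat.mod_add_mod]
    have hv'val : (c' A₂ t - r' t).val = (v + F + (n - s')) % n := by
      have hx : c' A₂ t - r' t = ((c A₂ t - r t) + (r t - r' t)) + (-(s' : ZMod n)) := by
        rw [eA2t]; ring
      rw [hx, ZMod.val_add, ZMod.val_add, hnegval, ← hv_def, ← hF_def, Nat.mod_add_mod]
    have key := keyArith n s' u v E F ((r' t - c' A₁ t).val) ((c' A₂ t - r' t).val) Φ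
      hn hs'1 hu1 hu2 hv1 hv2 hEn hEF hEd hu'val hv'val hΦ
    have hcd1' : cd (c' A₁ t) (r' t) =
        min ((r' t - c' A₁ t).val) (n - (r' t - c' A₁ t).val) := by rw [cd_comm, cd_def']
    have hcd2' : cd (c' A₂ t) (r' t) =
        min ((c' A₂ t - r' t).val) (n - (c' A₂ t - r' t).val) := by rw [cd_def']
    rcases key with h | h | h
    · left; omega
    · right; left; omega
    · right; right; omega
  have hΦpos : 1 ≤ Φ := by omega
  exact CanForce.bind step1 (fun c r h => IH (Φ - 1) (by omega) c r h.1 h.2.1 h.2.2.1 h.2.2.2)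

end CR

namespace CR
open SimpleGraph

variable {n k m : ℕ} [NeZero n] {s' : ℕ}

lemma master (hn : 2 * s' + 2 ≤ n) (hs'1 : 1 ≤ s') :
    ∀ (j : ℕ) (T : Finset (Fin k)), T.card = j →
    ∀ (mt : Fin m → Finset (Fin k)) (F : Finset (Fin m)), j + 1 ≤ F.card →
    (∀ A ∈ F, mt A = ∅) →
    ∀ c r, (∀ B, Close s' (mt B) B c r) →
    ∃ nn, CanForce (strongPowerCycle n k) s' s'
      (fun c r => (∀ B, Close s' (mt B) B c r) ∧ ∃ A ∈ F, Close s' T A c r) nn c r := by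
  classical
  intro j
  induction j with
  | zero =>
    intro T hT mt F hF hfree c r hcl
    obtain ⟨A, hA⟩ := Finset.card_pos.mp (show 0 < F.card by omega)
    have hTe : T = ∅ := Finset.card_eq_zero.mp hT
    refine ⟨0, ?_⟩
    rw [CanForce_zero]
    exact ⟨hcl, A, hA, by intro i hi; rw [hTe] at hi; simp at hi⟩
  | succ j ih =>
    intro T hT mt F hF hfree c r hcl
    obtain ⟨t, ht⟩ := Finset.card_pos.mp (show 0 < T.card by omega)
    set T' := T.erase t with hT'
    have hT'card : T'.card = j := by rw [hT', Finset.card_erase_of_mem ht, hT]; omega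
    obtain ⟨n₁, CF₁⟩ := ih T' hT'card mt F (by omega) hfree c r hcl
    refine CanForce.bind CF₁ (fun c₁ r₁ h₁ => ?_)
    obtain ⟨hcl₁, A, hAF, hClA⟩ := h₁
    set mt' := Function.update mt A T' with hmt'
    set F' := F.erase A with hF'def
    have hF' : j + 1 ≤ F'.card := by
      rw [hF'def, Finset.card_erase_of_mem hAF]; omega
    have hfree' : ∀ B ∈ F', mt' B = ∅ := by
      intro B hB
      have hBA : B ≠ A := Finset.ne_of_mem_erase hB
      rw [hmt', Function.update_of_ne hBA]
      exact hfree B (Finset.mem_of_mem_erase hB)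
    have hcl' : ∀ B, Close s' (mt' B) B c₁ r₁ := by
      intro B
      by_cases hBA : B = A
      · subst hBA; rw [hmt', Function.update_self]; exact hClA
      · rw [hmt', Function.update_of_ne hBA]; exact hcl₁ B
    obtain ⟨n₂, CF₂⟩ := ih T' hT'card mt' F' hF' hfree' c₁ r₁ hcl'
    refine CanForce.bind CF₂ (fun c₂ r₂ h₂ => ?_)
    obtain ⟨hcl₂, A₂, hA₂F', hClA₂⟩ := h₂
    have hA₂ne : A₂ ≠ A := Finset.ne_of_mem_erase hA₂F'
    have hA₂F : A₂ ∈ F := Finset.mem_of_mem_erase hA₂F'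
    have hClA' : Close s' T' A c₂ r₂ := by
      have := hcl₂ A
      rwa [hmt', Function.update_self] at this
    have hmtB : ∀ B, Close s' (mt B) B c₂ r₂ := by
      intro B
      by_cases hBA : B = A
      · subst hBA
        intro i hi
        rw [hfree _ hAF] at hi
        simp at hi
      · have := hcl₂ B
        rwa [hmt', Function.update_of_ne hBA] at this
    have hpot : cd (c₂ A t) (r₂ t) ≤ s' ∨ cd (c₂ A₂ t) (r₂ t) ≤ s' ∨
        (r₂ t - c₂ A t).val + (c₂ A₂ t - r₂ t).val ≤ 2 * n := by
      right; right
      have := ZMod.val_lt (r₂ t - c₂ A t)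
      have := ZMod.val_lt (c₂ A₂ t - r₂ t)
      omega
    obtain ⟨n₃, CF₃⟩ := squeeze hn hs'1 mt A A₂ (Ne.symm hA₂ne) (hfree A hAF)
      (hfree A₂ hA₂F) T' t (Finset.notMem_erase t T) (2 * n) c₂ r₂ hmtB hClA' hClA₂ hpot
    refine ⟨n₃, CanForce.mono_P (fun c r h => ⟨h.1, ?_⟩) CF₃⟩
    have hins : insert t T' = T := Finset.insert_erase ht
    rcases h.2 with h' | h'
    · exact ⟨A, hAF, by rwa [hins] at h'⟩
    · exact ⟨A₂, hA₂F, by rwa [hins] at h'⟩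

lemma upper_bound (hn : 2 * s' + 2 ≤ n) (hs'1 : 1 ≤ s')
    (c : Fin (k + 1) → (Fin k → ZMod n)) (r : Fin k → ZMod n) :
    ∃ nn, CanCatch (strongPowerCycle n k) s' s' nn c r := by
  classical
  obtain ⟨n₁, CF₁⟩ := master (m := k + 1) hn hs'1 k Finset.univ (by simp)
    (fun _ => ∅) Finset.univ (by simp) (fun _ _ => rfl) c r
    (by intro B i hi; simp at hi)
  have h2 : ∃ nn, CanForce (strongPowerCycle n k) s' s'
      (fun (c : Fin (k+1) → (Fin k → ZMod n)) r => ∃ i, c i = r) nn c r := by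
    refine CanForce.bind CF₁ (fun c₁ r₁ h₁ => ?_)
    obtain ⟨-, A, -, hClA⟩ := h₁
    refine ⟨1, Or.inr ⟨Function.update c₁ A r₁, ?_, Or.inl ⟨A, Function.update_self _ _ _⟩⟩⟩
    intro B
    rw [copStep_iff (by omega)]
    intro i
    by_cases hBA : B = A
    · subst hBA
      rw [Function.update_self]
      exact hClA i (Finset.mem_univ i)
    · rw [Function.update_of_ne hBA]
      simp [cd_self]
  obtain ⟨nn, h⟩ := h2
  exact ⟨nn, h.toCanCatch⟩

end CR

namespace CR
open SimpleGraph

lemma zero_cops {V : Type*} (G : SimpleGraph V) (sc sr : ℕ) (r : V)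
    (cops : Fin 0 → V) : ∀ nn, ¬ CanCatch G sc sr nn cops r := by
  have key : ∀ nn (c : Fin 0 → V) (r : V), ¬ CanCatch G sc sr nn c r := by
    intro nn
    induction nn with
    | zero => rintro c r ⟨i, -⟩; exact i.elim0
    | succ nn ih =>
      rintro c r (⟨i, -⟩ | ⟨c', -, (⟨i, -⟩ | hall)⟩)
      · exact i.elim0
      · exact i.elim0
      · exact ih c' r (hall r ⟨SimpleGraph.Walk.nil, by simp⟩)
  exact fun nn => key nn cops r

variable {n k m : ℕ} [NeZero n] {s s' : ℕ}

lemma lower_bound (hn : n = 2 * s + 2) (hs'1 : 1 ≤ s') (hss : s' ≤ s) (hm : m ≤ k)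
    (cops : Fin m → (Fin k → ZMod n)) :
    ∃ r, ∀ nn, ¬ CanCatch (strongPowerCycle n k) s' s' nn cops r := by
  classical
  set σ : ZMod n := ((s + 1 : ℕ) : ZMod n) with hσdef
  have hvalσ : σ.val = s + 1 := ZMod.val_cast_of_lt (by omega)
  have hσ0 : σ ≠ 0 := by
    intro h; rw [h, ZMod.val_zero] at hvalσ; omega
  have hanti : ∀ x : ZMod n, cd x (x + σ) = s + 1 := by
    intro x
    have h1 : x + σ - x = σ := by ring
    have h2 : cd x (x + σ) = min ((x + σ - x).val) (n - (x + σ - x).val) := by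
      rw [cd_comm, cd_def']
    rw [h2, h1, hvalσ]
    omega
  set emb : Fin m → Fin k := Fin.castLE hm with hembdef
  have hembval : ∀ j : Fin m, ((emb j : Fin k) : ℕ) = (j : ℕ) := fun j => rfl
  -- the invariant: robber is antipodal to cop j in coordinate (emb j)
  set Inv : (Fin m → (Fin k → ZMod n)) → (Fin k → ZMod n) → Prop :=
    fun c r => ∀ j : Fin m, r (emb j) = c j (emb j) + σ with hInv
  have hn2 : 2 ≤ n := by omega
  have main : ∀ nn c r, Inv c r → ¬ CanCatch (strongPowerCycle n k) s' s' nn c r := by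
    intro nn
    induction nn with
    | zero =>
      rintro c r hinv ⟨i, hi⟩
      have := hinv i
      rw [← hi] at this
      exact hσ0 (by linear_combination -this)
    | succ nn ih =>
      rintro c r hinv (⟨i, hi⟩ | ⟨c', hstep, (⟨i, hi⟩ | hall)⟩)
      · have := hinv i
        rw [← hi] at this
        exact hσ0 (by linear_combination -this)
      · -- cops cannot capture: they are too far
        have hd : cd (c i (emb i)) (c' i (emb i)) ≤ s' :=
          ((copStep_iff hn2 s' _ _).mp (hstep i)) (emb i)
        have hri : r (emb i) = c i (emb i) + σ := hinv i
        have : cd (c i (emb i)) (r (emb i)) = s + 1 := by rw [hri]; exact hanti _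
        rw [hi] at hd
        omega
      · -- robber responds, restoring the invariant
        set r' : Fin k → ZMod n :=
          fun i => if h : (i : ℕ) < m then c' ⟨(i : ℕ), h⟩ i + σ else r i with hr'def
        have hr'm : ∀ j : Fin m, r' (emb j) = c' j (emb j) + σ := by
          intro j
          have hj : ((emb j : Fin k) : ℕ) < m := j.isLt
          rw [hr'def]
          simp only
          rw [dif_pos hj]
          congr 1
        have hd : ∀ i, cd (r i) (r' i) ≤ s' := by
          intro i
          by_cases h : (i : ℕ) < m
          · set j : Fin m := ⟨(i : ℕ), h⟩ with hj
            have hemb : emb j = i := by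
              apply Fin.ext; rw [hembval]
            have h1 : r i = c j i + σ := by
              have := hinv j; rw [hemb] at this; exact this
            have h2 : r' i = c' j i + σ := by rw [hr'def]; simp only; rw [dif_pos h]
            rw [h1, h2]
            have : cd (c j i + σ) (c' j i + σ) = cd (c j i) (c' j i) := by
              unfold cd
              have e1 : c j i + σ - (c' j i + σ) = c j i - c' j i := by ring
              have e2 : c' j i + σ - (c j i + σ) = c' j i - c j i := by ring
              rw [e1, e2]
            rw [this]
            exact ((copStep_iff hn2 s' _ _).mp (hstep j)) i
          · rw [hr'def]; simp only; rw [dif_neg h, cd_self]; omega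
        have hrs : robberStep (strongPowerCycle n k) s' {x | ∃ i, c' i = x} r r' := by
          apply robberStep_exists hn2 hd
          rintro x hx ⟨j, rfl⟩
          have hj : ((emb j : Fin k) : ℕ) < m := j.isLt
          have h2 : r' (emb j) = c' j (emb j) + σ := hr'm j
          have := hx (emb j)
          rw [h2] at this
          have := hanti (c' j (emb j))
          omega
        exact ih c' r' hr'm (hall r' hrs)
  set r0 : Fin k → ZMod n :=
    fun i => if h : (i : ℕ) < m then cops ⟨(i : ℕ), h⟩ i + σ else 0 with hr0def
  have hinv0 : Inv cops r0 := by
    intro j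
    have hj : ((emb j : Fin k) : ℕ) < m := j.isLt
    rw [hr0def]
    simp only
    rw [dif_pos hj]
    congr 1
  exact ⟨r0, fun nn => main nn cops r0 hinv0⟩

end CR

namespace CR
variable {n : ℕ} [NeZero n]

lemma cd_le_half (a b : ZMod n) : cd a b ≤ n / 2 := by
  rw [cd_def']
  have := ZMod.val_lt (a - b)
  omega

end CR

open CR in
/-- For positive integers `k` and `s`, the `k`-fold strong product `G` of `C_{2s+2}`
satisfies `c_{s',s'}(G) = k + 1` if `s' ≤ s` and `c_{s',s'}(G) = 1` if `s' > s`. -/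
theorem statement8 (k s : ℕ) (hk : 0 < k) (hs : 0 < s) (s' : ℕ) (hs' : 0 < s') :
    copNumber (strongPowerCycle (2 * s + 2) k) s' s' = if s' ≤ s then k + 1 else 1 := by
  haveI : NeZero (2 * s + 2) := ⟨by omega⟩
  classical
  set S : Set ℕ := {k' : ℕ | ∃ cops : Fin k' → (Fin k → ZMod (2 * s + 2)),
    ∀ r, ∃ nn, CanCatch (strongPowerCycle (2 * s + 2) k) s' s' nn cops r} with hS
  have hcopnum : copNumber (strongPowerCycle (2 * s + 2) k) s' s' = sInf S := rfl
  rw [hcopnum]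
  split_ifs with hcase
  · -- s' ≤ s : answer k + 1
    have hup : (k + 1) ∈ S := by
      refine ⟨fun _ _ => 0, fun r => ?_⟩
      exact upper_bound (by omega) (by omega) _ r
    have hlow : ∀ j, j ≤ k → j ∉ S := by
      rintro j hj ⟨cops, hcops⟩
      obtain ⟨r, hr⟩ := lower_bound rfl (by omega) hcase hj cops
      obtain ⟨nn, hcat⟩ := hcops r
      exact hr nn hcat
    have h1 : sInf S ≤ k + 1 := Nat.sInf_le hup
    have h2 : sInf S ∈ S := Nat.sInf_mem ⟨k + 1, hup⟩
    rcases Nat.lt_or_ge (sInf S) (k + 1) with h | h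
    · exact absurd h2 (hlow _ (by omega))
    · omega
  · -- s' > s : answer 1
    have hup : 1 ∈ S := by
      refine ⟨fun _ _ => 0, fun r => ⟨1, ?_⟩⟩
      refine Or.inr ⟨fun _ => r, fun i => ?_, Or.inl ⟨0, rfl⟩⟩
      rw [copStep_iff (by omega)]
      intro i'
      refine le_trans (cd_le_half _ _) ?_
      omega
    have hzero : 0 ∉ S := by
      rintro ⟨cops, hcops⟩
      obtain ⟨nn, hcat⟩ := hcops (fun _ => 0)
      exact zero_cops _ s' s' (fun _ => 0) cops nn hcat
    have h1 : sInf S ≤ 1 := Nat.sInf_le hup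
    have h2 : sInf S ∈ S := Nat.sInf_mem ⟨1, hup⟩
    rcases Nat.eq_or_lt_of_le h1 with h | h
    · omega
    · interval_cases (sInf S)
      · exact absurd h2 hzero
end

section
/- Let q ≥ 2, suppose a finite projective plane of order q exists, and let P be its incidence graph. Then c_{2,2}(P) = 2, but c_{2,2}(P □ P) ≥ q + 1. -/
open SimpleGraph

variable {V : Type*}

/-- The incidence graph of a point–line incidence geometry: one vertex for each point
and one for each line, a point-vertex being adjacent to a line-vertex iff the point
lies on the line. -/
def incidenceGraph (P L : Type*) [Membership P L] : SimpleGraph (P ⊕ L) where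
  Adj x y :=
    (∃ (p : P) (l : L), x = Sum.inl p ∧ y = Sum.inr l ∧ p ∈ l) ∨
    (∃ (p : P) (l : L), x = Sum.inr l ∧ y = Sum.inl p ∧ p ∈ l)
  symm := by
    constructor
    rintro x y (⟨p, l, h1, h2, h3⟩ | ⟨p, l, h1, h2, h3⟩)
    · exact Or.inr ⟨p, l, h2, h1, h3⟩
    · exact Or.inl ⟨p, l, h2, h1, h3⟩
  loopless := by
    constructor
    rintro x (⟨p, l, h1, h2, -⟩ | ⟨p, l, h1, h2, -⟩) <;> rw [h1] at h2 <;> exact absurd h2 (by simp)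

set_option linter.unusedSectionVars false

open SimpleGraph Sum Configuration


/-- classification of short walks -/
lemma walk_len_le_one {G : SimpleGraph V} {x y : V} (w : G.Walk x y) (h : w.length ≤ 1) :
    x = y ∨ G.Adj x y := by
  match w with
  | .nil => exact Or.inl rfl
  | .cons a w' =>
    have : w'.length = 0 := by simpa using h
    exact Or.inr ((SimpleGraph.Walk.eq_of_length_eq_zero this) ▸ a)

lemma walk_len_le_two {G : SimpleGraph V} {x y : V} (w : G.Walk x y) (h : w.length ≤ 2) :
    x = y ∨ G.Adj x y ∨ ∃ z, G.Adj x z ∧ G.Adj z y := by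
  match w with
  | .nil => exact Or.inl rfl
  | .cons (v := z) a w' =>
    have h' : w'.length ≤ 1 := by simpa using h
    rcases walk_len_le_one w' h' with rfl | hadj
    · exact Or.inr (Or.inl a)
    · exact Or.inr (Or.inr ⟨z, a, hadj⟩)

section IG
variable {P L : Type*} [Membership P L]

lemma ig_adj_inl_inr {p : P} {l : L} (h : p ∈ l) :
    (incidenceGraph P L).Adj (inl p) (inr l) := Or.inl ⟨p, l, rfl, rfl, h⟩

lemma ig_adj_inr_inl {p : P} {l : L} (h : p ∈ l) :
    (incidenceGraph P L).Adj (inr l) (inl p) := Or.inr ⟨p, l, rfl, rfl, h⟩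

lemma ig_mem_of_adj {p : P} {l : L} (h : (incidenceGraph P L).Adj (inl p) (inr l)) : p ∈ l := by
  rcases h with ⟨p', l', h1, h2, h3⟩ | ⟨p', l', h1, h2, h3⟩
  · rw [inl.injEq] at h1; rw [inr.injEq] at h2; rwa [h1, h2]
  · exact absurd h1 (by simp)

lemma ig_mem_of_adj' {p : P} {l : L} (h : (incidenceGraph P L).Adj (inr l) (inl p)) : p ∈ l :=
  ig_mem_of_adj h.symm

lemma ig_not_adj_inl {p p' : P} : ¬ (incidenceGraph P L).Adj (inl p) (inl p') := by
  rintro (⟨a, b, h1, h2, h3⟩ | ⟨a, b, h1, h2, h3⟩) <;> simp at h1 h2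

lemma ig_not_adj_inr {l l' : L} : ¬ (incidenceGraph P L).Adj (inr l) (inr l') := by
  rintro (⟨a, b, h1, h2, h3⟩ | ⟨a, b, h1, h2, h3⟩) <;> simp at h1 h2

lemma ig_adj_side {x y : P ⊕ L} (h : (incidenceGraph P L).Adj x y) : x.isLeft = !y.isLeft := by
  rcases h with ⟨a, b, h1, h2, -⟩ | ⟨a, b, h1, h2, -⟩ <;> subst h1 <;> subst h2 <;> rfl

/-- parity of walks in the (bipartite) incidence graph -/
lemma ig_walk_parity {x y : P ⊕ L} (w : (incidenceGraph P L).Walk x y) :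
    (x.isLeft = y.isLeft) ↔ Even w.length := by
  induction w with
  | nil => simp
  | @cons a b c h w ih =>
    have hs := ig_adj_side h
    rw [SimpleGraph.Walk.length_cons, Nat.even_add_one, ← ih, hs]
    cases hb : b.isLeft <;> cases hc : c.isLeft <;> simp

end IG

section DD
variable {P L : Type*} [Membership P L]

open Classical in
/-- combinatorial distance in the incidence graph -/
noncomputable def dd : P ⊕ L → P ⊕ L → ℕ
  | inl p, inl p' => if p = p' then 0 else 2
  | inr l, inr l' => if l = l' then 0 else 2
  | inl p, inr l => if p ∈ l then 1 else 3
  | inr l, inl p => if p ∈ l then 1 else 3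

lemma dd_self (x : P ⊕ L) : dd x x = 0 := by cases x <;> simp [dd]

lemma dd_eq_zero {x y : P ⊕ L} (h : dd x y = 0) : x = y := by
  cases x <;> cases y <;> simp [dd] at h ⊢ <;> first
    | exact h
    | (split at h <;> simp_all)

lemma dd_inl_inr_pos (p : P) (l : L) : 1 ≤ dd (inl p) (inr l) := by
  simp only [dd]; split <;> omega

lemma dd_inr_inl_pos (p : P) (l : L) : 1 ≤ dd (inr l) (inl p) := by
  simp only [dd]; split <;> omega

lemma dd_inl_inl_of_ne {p p' : P} (h : p ≠ p') : dd (inl p : P ⊕ L) (inl p') = (2:ℕ) := by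
  simp [dd, h]

lemma dd_inr_inr_of_ne {l l' : L} (h : l ≠ l') : dd (inr l : P ⊕ L) (inr l') = (2:ℕ) := by
  simp [dd, h]

lemma dd_inl_inr_of_not_mem {p : P} {l : L} (h : p ∉ l) : dd (inl p) (inr l) = 3 := by
  simp [dd, h]

lemma dd_inr_inl_of_not_mem {p : P} {l : L} (h : p ∉ l) : dd (inr l) (inl p) = 3 := by
  simp [dd, h]

lemma dd_inl_inr_of_mem {p : P} {l : L} (h : p ∈ l) : dd (inl p) (inr l) = 1 := by
  simp [dd, h]

lemma dd_inr_inl_of_mem {p : P} {l : L} (h : p ∈ l) : dd (inr l) (inl p) = 1 := by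
  simp [dd, h]

/-- Every walk in the incidence graph has length at least `dd`. -/
lemma dd_le_length {x y : P ⊕ L} (w : (incidenceGraph P L).Walk x y) : dd x y ≤ w.length := by
  have hpar := ig_walk_parity w
  cases x with
  | inl p =>
    cases y with
    | inl p' =>
      by_cases h : p = p'
      · subst h; simp [dd_self]
      · rw [dd_inl_inl_of_ne h]
        have heven : Even w.length := hpar.mp rfl
        have hne : w.length ≠ 0 := fun h0 => by
          have := SimpleGraph.Walk.eq_of_length_eq_zero h0
          simp only [inl.injEq] at this; exact h this
        obtain ⟨m, hm⟩ := heven; omega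
    | inr l =>
      by_cases h : p ∈ l
      · rw [dd_inl_inr_of_mem h]
        have hodd : ¬ Even w.length := fun he => by simp [← hpar] at he
        rcases Nat.even_or_odd w.length with he | ⟨m, hm⟩
        · exact absurd he hodd
        · omega
      · rw [dd_inl_inr_of_not_mem h]
        have hodd : ¬ Even w.length := fun he => by simp [← hpar] at he
        have h1 : w.length ≠ 1 := by
          intro h1
          rcases walk_len_le_one w (by omega) with heq | hadj
          · simp at heq
          · exact h (ig_mem_of_adj hadj)
        rcases Nat.even_or_odd w.length with he | ⟨m, hm⟩
        · exact absurd he hodd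
        · omega
  | inr l =>
    cases y with
    | inr l' =>
      by_cases h : l = l'
      · subst h; simp [dd_self]
      · rw [dd_inr_inr_of_ne h]
        have heven : Even w.length := hpar.mp rfl
        have hne : w.length ≠ 0 := fun h0 => by
          have := SimpleGraph.Walk.eq_of_length_eq_zero h0
          simp only [inr.injEq] at this; exact h this
        obtain ⟨m, hm⟩ := heven; omega
    | inl p =>
      by_cases h : p ∈ l
      · rw [dd_inr_inl_of_mem h]
        have hodd : ¬ Even w.length := fun he => by simp [← hpar] at he
        rcases Nat.even_or_odd w.length with he | ⟨m, hm⟩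
        · exact absurd he hodd
        · omega
      · rw [dd_inr_inl_of_not_mem h]
        have hodd : ¬ Even w.length := fun he => by simp [← hpar] at he
        have h1 : w.length ≠ 1 := by
          intro h1
          rcases walk_len_le_one w (by omega) with heq | hadj
          · simp at heq
          · exact h (ig_mem_of_adj' hadj)
        rcases Nat.even_or_odd w.length with he | ⟨m, hm⟩
        · exact absurd he hodd
        · omega

end DD

section Counting
open Configuration Configuration.ProjectivePlane
variable {P L : Type*} [Membership P L] [Fintype P] [Fintype L] [ProjectivePlane P L]

lemma exists_line_through_avoiding {k : ℕ} (hk : k ≤ order P L) (p : P) (f : Fin k → L) :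
    ∃ l : L, p ∈ l ∧ ∀ i, l ≠ f i := by
  classical
  set s := Finset.univ.filter fun l : L => p ∈ l with hs
  set t := Finset.univ.image f with ht
  have hsc : s.card = order P L + 1 := by
    have h1 := lineCount_eq L p
    rwa [lineCount, Nat.card_eq_fintype_card, Fintype.card_subtype] at h1
  have htc : t.card ≤ k := le_trans Finset.card_image_le (by simp)
  have hne : (s \ t).Nonempty := by
    rw [← Finset.card_pos]
    have := Finset.card_le_card_sdiff_add_card (s := s) (t := t)
    omega
  obtain ⟨l, hl⟩ := hne
  rw [Finset.mem_sdiff] at hl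
  refine ⟨l, by simpa [hs] using hl.1, fun i hi => hl.2 ?_⟩
  rw [ht, Finset.mem_image]
  exact ⟨i, Finset.mem_univ i, hi.symm⟩

lemma exists_point_on_avoiding {k : ℕ} (hk : k ≤ order P L) (l : L) (f : Fin k → P) :
    ∃ p : P, p ∈ l ∧ ∀ i, p ≠ f i := by
  classical
  set s := Finset.univ.filter fun p : P => p ∈ l with hs
  set t := Finset.univ.image f with ht
  have hsc : s.card = order P L + 1 := by
    have h1 := pointCount_eq P l
    rwa [pointCount, Nat.card_eq_fintype_card, Fintype.card_subtype] at h1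
  have htc : t.card ≤ k := le_trans Finset.card_image_le (by simp)
  have hne : (s \ t).Nonempty := by
    rw [← Finset.card_pos]
    have := Finset.card_le_card_sdiff_add_card (s := s) (t := t)
    omega
  obtain ⟨p, hp⟩ := hne
  rw [Finset.mem_sdiff] at hp
  refine ⟨p, by simpa [hs] using hp.1, fun i hi => hp.2 ?_⟩
  rw [ht, Finset.mem_image]
  exact ⟨i, Finset.mem_univ i, hi.symm⟩

/-- avoid `k ≤ q` forbidden sets of points, each of size at most `q+1` -/
lemma exists_point_avoiding {k : ℕ} (hk : k ≤ order P L) (f : Fin k → Finset P)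
    (hf : ∀ i, (f i).card ≤ order P L + 1) : ∃ p : P, ∀ i, p ∉ f i := by
  classical
  set u := Finset.univ.biUnion f with hu
  have huc : u.card ≤ k * (order P L + 1) := by
    calc u.card ≤ ∑ i, (f i).card := Finset.card_biUnion_le
    _ ≤ ∑ _i : Fin k, (order P L + 1) := Finset.sum_le_sum fun i _ => hf i
    _ = k * (order P L + 1) := by simp [mul_comm]
  have hcard : u.card < Fintype.card P := by
    have h2 : Fintype.card P = order P L ^ 2 + order P L + 1 := card_points P L
    have : k * (order P L + 1) ≤ order P L * (order P L + 1) :=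
      Nat.mul_le_mul_right _ hk
    nlinarith [sq_nonneg (order P L)]
  have hne : ((Finset.univ : Finset P) \ u).Nonempty := by
    rw [← Finset.card_pos]
    have := Finset.card_le_card_sdiff_add_card (s := (Finset.univ : Finset P)) (t := u)
    have hcu : (Finset.univ : Finset P).card = Fintype.card P := rfl
    omega
  obtain ⟨p, hp⟩ := hne
  rw [Finset.mem_sdiff] at hp
  exact ⟨p, fun i hi => hp.2 (Finset.mem_biUnion.mpr ⟨i, Finset.mem_univ i, hi⟩)⟩

lemma exists_line_avoiding {k : ℕ} (hk : k ≤ order P L) (f : Fin k → Finset L)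
    (hf : ∀ i, (f i).card ≤ order P L + 1) : ∃ l : L, ∀ i, l ∉ f i := by
  classical
  set u := Finset.univ.biUnion f with hu
  have huc : u.card ≤ k * (order P L + 1) := by
    calc u.card ≤ ∑ i, (f i).card := Finset.card_biUnion_le
    _ ≤ ∑ _i : Fin k, (order P L + 1) := Finset.sum_le_sum fun i _ => hf i
    _ = k * (order P L + 1) := by simp [mul_comm]
  have hcard : u.card < Fintype.card L := by
    have h2 : Fintype.card L = order P L ^ 2 + order P L + 1 := card_lines P L
    have : k * (order P L + 1) ≤ order P L * (order P L + 1) :=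
      Nat.mul_le_mul_right _ hk
    nlinarith [sq_nonneg (order P L)]
  have hne : ((Finset.univ : Finset L) \ u).Nonempty := by
    rw [← Finset.card_pos]
    have := Finset.card_le_card_sdiff_add_card (s := (Finset.univ : Finset L)) (t := u)
    have hcu : (Finset.univ : Finset L).card = Fintype.card L := rfl
    omega
  obtain ⟨l, hl⟩ := hne
  rw [Finset.mem_sdiff] at hl
  exact ⟨l, fun i hi => hl.2 (Finset.mem_biUnion.mpr ⟨i, Finset.mem_univ i, hi⟩)⟩

end Counting

section Walks
open Configuration Configuration.ProjectivePlane
variable {P L : Type*} [Membership P L] [Fintype P] [Fintype L] [ProjectivePlane P L]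

lemma line_unique {p p' : P} (h : p ≠ p') {l : L} (hp : p ∈ l) (hp' : p' ∈ l) :
    l = HasLines.mkLine (P := P) (L := L) h :=
  (Nondegenerate.eq_or_eq hp hp' (HasLines.mkLine_ax h).1 (HasLines.mkLine_ax h).2).resolve_left h

lemma point_unique {l l' : L} (h : l ≠ l') {p : P} (hp : p ∈ l) (hp' : p ∈ l') :
    p = HasPoints.mkPoint (P := P) (L := L) h :=
  (Nondegenerate.eq_or_eq hp (HasPoints.mkPoint_ax h).1 hp' (HasPoints.mkPoint_ax h).2).resolve_right h

lemma dd_symm (x y : P ⊕ L) : dd x y = dd y x := by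
  cases x <;> cases y <;> simp only [dd] <;> split <;> split <;> simp_all

lemma exists_walk_dd_pl (p : P) (l : L) :
    ∃ w : (incidenceGraph P L).Walk (inl p) (inr l), w.length = dd (inl p) (inr l) := by
  by_cases h : p ∈ l
  · exact ⟨.cons (ig_adj_inl_inr h) .nil, by simp [dd_inl_inr_of_mem h]⟩
  · obtain ⟨x0, hx0, -⟩ := exists_point_on_avoiding (k := 0) (Nat.zero_le _) l Fin.elim0
    have hne : p ≠ x0 := fun he => h (he ▸ hx0)
    exact ⟨.cons (ig_adj_inl_inr (HasLines.mkLine_ax hne).1)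
      (.cons (ig_adj_inr_inl (HasLines.mkLine_ax hne).2)
        (.cons (ig_adj_inl_inr hx0) .nil)), by simp [dd_inl_inr_of_not_mem h]⟩

lemma exists_walk_dd (x y : P ⊕ L) :
    ∃ w : (incidenceGraph P L).Walk x y, w.length = dd x y := by
  cases x with
  | inl p =>
    cases y with
    | inl p' =>
      by_cases h : p = p'
      · subst h; exact ⟨.nil, by simp [dd_self]⟩
      · exact ⟨.cons (ig_adj_inl_inr (HasLines.mkLine_ax h).1)
          (.cons (ig_adj_inr_inl (HasLines.mkLine_ax h).2) .nil), by
            simp [dd_inl_inl_of_ne h]⟩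
    | inr l => exact exists_walk_dd_pl p l
  | inr l =>
    cases y with
    | inl p =>
      obtain ⟨w, hw⟩ := exists_walk_dd_pl p l
      exact ⟨w.reverse, by rw [SimpleGraph.Walk.length_reverse, hw, dd_symm]⟩
    | inr l' =>
      by_cases h : l = l'
      · subst h; exact ⟨.nil, by simp [dd_self]⟩
      · exact ⟨.cons (ig_adj_inr_inl (HasPoints.mkPoint_ax h).1)
          (.cons (ig_adj_inl_inr (HasPoints.mkPoint_ax h).2) .nil), by
            simp [dd_inr_inr_of_ne h]⟩

lemma dd_triangle (x y z : P ⊕ L) : dd x z ≤ dd x y + dd y z := by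
  obtain ⟨w1, h1⟩ := exists_walk_dd x y
  obtain ⟨w2, h2⟩ := exists_walk_dd y z
  have := dd_le_length (w1.append w2)
  rwa [SimpleGraph.Walk.length_append, h1, h2] at this

end Walks

section Box
variable {α β : Type*} {G : SimpleGraph α} {H : SimpleGraph β}

lemma boxWalk_proj {x y : α × β} (w : (G □ H).Walk x y) :
    ∃ (w1 : G.Walk x.1 y.1) (w2 : H.Walk x.2 y.2), w1.length + w2.length = w.length := by
  induction w with
  | nil => exact ⟨.nil, .nil, rfl⟩
  | @cons a b c h w ih =>
    obtain ⟨w1, w2, hl⟩ := ih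
    rcases SimpleGraph.boxProd_adj.mp h with ⟨hG, he⟩ | ⟨hH, he⟩
    · refine ⟨.cons hG (w1.copy rfl rfl), w2.copy he.symm rfl, ?_⟩
      simp only [SimpleGraph.Walk.length_cons, SimpleGraph.Walk.length_copy]
      omega
    · refine ⟨w1.copy he.symm rfl, .cons hH (w2.copy rfl rfl), ?_⟩
      simp only [SimpleGraph.Walk.length_cons, SimpleGraph.Walk.length_copy]
      omega

end Box

section Dbox
variable {P L : Type*} [Membership P L] [Fintype P] [Fintype L] [Configuration.ProjectivePlane P L]

/-- distance in the box product of two incidence graphs -/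
noncomputable def Dbox (c r : (P ⊕ L) × (P ⊕ L)) : ℕ := dd c.1 r.1 + dd c.2 r.2

lemma Dbox_eq_zero {c r : (P ⊕ L) × (P ⊕ L)} (h : Dbox c r = 0) : c = r := by
  obtain ⟨c1, c2⟩ := c; obtain ⟨r1, r2⟩ := r
  simp only [Dbox] at h
  have h1 : dd c1 r1 = 0 := by omega
  have h2 : dd c2 r2 = 0 := by omega
  rw [dd_eq_zero h1, dd_eq_zero h2]

lemma Dbox_le_length {c r : (P ⊕ L) × (P ⊕ L)}
    (w : (incidenceGraph P L □ incidenceGraph P L).Walk c r) : Dbox c r ≤ w.length := by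
  obtain ⟨w1, w2, hl⟩ := boxWalk_proj w
  have := dd_le_length w1
  have := dd_le_length w2
  simp only [Dbox]; omega

lemma Dbox_triangle (x y z : (P ⊕ L) × (P ⊕ L)) : Dbox x z ≤ Dbox x y + Dbox y z := by
  have := dd_triangle x.1 y.1 z.1
  have := dd_triangle x.2 y.2 z.2
  simp only [Dbox]; omega

end Dbox

section Escape
open Configuration Configuration.ProjectivePlane
variable {P L : Type*} [Membership P L] [Fintype P] [Fintype L] [ProjectivePlane P L]

/-- robber positions used in the product strategy: both coordinates points,
or both coordinates lines -/
def Homog (r : (P ⊕ L) × (P ⊕ L)) : Prop :=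
  (∃ p p', r = (inl p, inl p')) ∨ (∃ l m, r = (inr l, inr m))

lemma escape {k : ℕ} (hk : k ≤ order P L) (cops : Fin k → (P ⊕ L) × (P ⊕ L))
    (r : (P ⊕ L) × (P ⊕ L)) (hH : Homog r) (hfar : ∀ i, 1 ≤ Dbox (cops i) r) :
    ∃ r', robberStep (incidenceGraph P L □ incidenceGraph P L) 2 {x | ∃ i, cops i = x} r r' ∧
      Homog r' ∧ ∀ i, 3 ≤ Dbox (cops i) r' := by
  classical
  rcases hH with ⟨p, p', rfl⟩ | ⟨l, m, rfl⟩
  · -- robber at a pair of points, moves to a pair of lines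
    obtain ⟨l0, -⟩ := Nondegenerate.exists_line (L := L) p
    set f : Fin k → L := fun i =>
      Sum.elim (fun a => if h : p = a then l0 else HasLines.mkLine h) id ((cops i).1) with hf
    obtain ⟨l, hpl, hl⟩ := exists_line_through_avoiding hk p f
    have hA1 : ∀ i a, (cops i).1 = inr a → a ≠ l := by
      intro i a h he
      apply hl i
      rw [hf]; simp only [h, Sum.elim_inr, id_eq]; exact he.symm
    have hA2 : ∀ i a, (cops i).1 = inl a → a ≠ p → a ∉ l := by
      intro i a h hap hal
      apply hl i
      have : l = HasLines.mkLine (Ne.symm hap) := line_unique (Ne.symm hap) hpl hal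
      rw [hf]; simp only [h, Sum.elim_inl]
      rw [dif_neg (Ne.symm hap)]; exact this
    set g : Fin k → L := fun i =>
      Sum.elim (fun b => if h : p' = b then l0 else HasLines.mkLine h) id ((cops i).2) with hg
    obtain ⟨m, hp'm, hm⟩ := exists_line_through_avoiding hk p' g
    have hB1 : ∀ i b, (cops i).2 = inr b → b ≠ m := by
      intro i b h he
      apply hm i
      rw [hg]; simp only [h, Sum.elim_inr, id_eq]; exact he.symm
    have hB2 : ∀ i b, (cops i).2 = inl b → b ≠ p' → b ∉ m := by
      intro i b h hbp hbm
      apply hm i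
      have : m = HasLines.mkLine (Ne.symm hbp) := line_unique (Ne.symm hbp) hp'm hbm
      rw [hg]; simp only [h, Sum.elim_inl]
      rw [dif_neg (Ne.symm hbp)]; exact this
    refine ⟨(inr l, inr m), ?_, Or.inr ⟨l, m, rfl⟩, ?_⟩
    · have e1 : (incidenceGraph P L □ incidenceGraph P L).Adj (inl p, inl p')
          ((inr l : P ⊕ L), (inl p' : P ⊕ L)) :=
        SimpleGraph.boxProd_adj.mpr (Or.inl ⟨ig_adj_inl_inr hpl, rfl⟩)
      have e2 : (incidenceGraph P L □ incidenceGraph P L).Adj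
          ((inr l : P ⊕ L), (inl p' : P ⊕ L)) ((inr l : P ⊕ L), (inr m : P ⊕ L)) :=
        SimpleGraph.boxProd_adj.mpr (Or.inr ⟨ig_adj_inl_inr hp'm, rfl⟩)
      refine ⟨.cons e1 (.cons e2 .nil), by simp, ?_⟩
      intro x hx
      simp only [SimpleGraph.Walk.support_cons, SimpleGraph.Walk.support_nil,
        List.tail_cons, List.mem_cons, List.not_mem_nil, or_false, List.mem_singleton] at hx
      rcases hx with rfl | rfl
      · rintro ⟨i, hi⟩
        exact hA1 i l (by rw [hi]) rfl
      · rintro ⟨i, hi⟩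
        exact hA1 i l (by rw [hi]) rfl
    · intro i
      have hfi := hfar i
      simp only [Dbox] at hfi ⊢
      rcases hc1 : (cops i).1 with a | a <;> rcases hc2 : (cops i).2 with b | b
      · -- both cop coordinates points
        by_cases hap : a = p
        · subst hap
          have hbp : b ≠ p' := by
            intro hbp; subst hbp
            rw [hc1, hc2, dd_self, dd_self] at hfi; omega
          have h3 : dd (inl b : P ⊕ L) (inr m) = 3 :=
            dd_inl_inr_of_not_mem (hB2 i b hc2 hbp)
          have h1 : dd (inl a : P ⊕ L) (inr l) = 1 := dd_inl_inr_of_mem hpl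
          omega
        · have h3 : dd (inl a : P ⊕ L) (inr l) = 3 :=
            dd_inl_inr_of_not_mem (hA2 i a hc1 hap)
          have := dd_inl_inr_pos b m
          omega
      · have h2 : dd (inr b : P ⊕ L) (inr m) = 2 := dd_inr_inr_of_ne (hB1 i b hc2)
        have := dd_inl_inr_pos a l
        omega
      · have h2 : dd (inr a : P ⊕ L) (inr l) = 2 := dd_inr_inr_of_ne (hA1 i a hc1)
        have := dd_inl_inr_pos b m
        omega
      · have := dd_inr_inr_of_ne (hA1 i a hc1)
        have := dd_inr_inr_of_ne (hB1 i b hc2)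
        omega
  · -- robber at a pair of lines, moves to a pair of points
    obtain ⟨p0, -⟩ := Nondegenerate.exists_point (P := P) l
    set f : Fin k → P := fun i =>
      Sum.elim id (fun a => if h : l = a then p0 else HasPoints.mkPoint h) ((cops i).1) with hf
    obtain ⟨p, hpl, hl'⟩ := exists_point_on_avoiding hk l f
    have hA1 : ∀ i a, (cops i).1 = inl a → a ≠ p := by
      intro i a h he
      apply hl' i
      rw [hf]; simp only [h, Sum.elim_inl, id_eq]; exact he.symm
    have hA2 : ∀ i a, (cops i).1 = inr a → a ≠ l → p ∉ a := by
      intro i a h hal hpa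
      apply hl' i
      have : p = HasPoints.mkPoint (Ne.symm hal) := point_unique (Ne.symm hal) hpl hpa
      rw [hf]; simp only [h, Sum.elim_inr]
      rw [dif_neg (Ne.symm hal)]; exact this
    set g : Fin k → P := fun i =>
      Sum.elim id (fun b => if h : m = b then p0 else HasPoints.mkPoint h) ((cops i).2) with hg
    obtain ⟨p', hp'm, hm'⟩ := exists_point_on_avoiding hk m g
    have hB1 : ∀ i b, (cops i).2 = inl b → b ≠ p' := by
      intro i b h he
      apply hm' i
      rw [hg]; simp only [h, Sum.elim_inl, id_eq]; exact he.symm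
    have hB2 : ∀ i b, (cops i).2 = inr b → b ≠ m → p' ∉ b := by
      intro i b h hbm hpb
      apply hm' i
      have : p' = HasPoints.mkPoint (Ne.symm hbm) := point_unique (Ne.symm hbm) hp'm hpb
      rw [hg]; simp only [h, Sum.elim_inr]
      rw [dif_neg (Ne.symm hbm)]; exact this
    refine ⟨(inl p, inl p'), ?_, Or.inl ⟨p, p', rfl⟩, ?_⟩
    · have e1 : (incidenceGraph P L □ incidenceGraph P L).Adj (inr l, inr m)
          ((inl p : P ⊕ L), (inr m : P ⊕ L)) :=
        SimpleGraph.boxProd_adj.mpr (Or.inl ⟨ig_adj_inr_inl hpl, rfl⟩)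
      have e2 : (incidenceGraph P L □ incidenceGraph P L).Adj
          ((inl p : P ⊕ L), (inr m : P ⊕ L)) ((inl p : P ⊕ L), (inl p' : P ⊕ L)) :=
        SimpleGraph.boxProd_adj.mpr (Or.inr ⟨ig_adj_inr_inl hp'm, rfl⟩)
      refine ⟨.cons e1 (.cons e2 .nil), by simp, ?_⟩
      intro x hx
      simp only [SimpleGraph.Walk.support_cons, SimpleGraph.Walk.support_nil,
        List.tail_cons, List.mem_cons, List.not_mem_nil, or_false, List.mem_singleton] at hx
      rcases hx with rfl | rfl
      · rintro ⟨i, hi⟩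
        exact hA1 i p (by rw [hi]) rfl
      · rintro ⟨i, hi⟩
        exact hA1 i p (by rw [hi]) rfl
    · intro i
      have hfi := hfar i
      simp only [Dbox] at hfi ⊢
      rcases hc1 : (cops i).1 with a | a <;> rcases hc2 : (cops i).2 with b | b
      · have h2 : dd (inl a : P ⊕ L) (inl p) = 2 := dd_inl_inl_of_ne (hA1 i a hc1)
        have h2' : dd (inl b : P ⊕ L) (inl p') = 2 := dd_inl_inl_of_ne (hB1 i b hc2)
        omega
      · have h2 : dd (inl a : P ⊕ L) (inl p) = 2 := dd_inl_inl_of_ne (hA1 i a hc1)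
        by_cases hbm : b = m
        · subst hbm
          have h1 : dd (inr b : P ⊕ L) (inl p') = 1 := dd_inr_inl_of_mem hp'm
          omega
        · have h3 : dd (inr b : P ⊕ L) (inl p') = 3 :=
            dd_inr_inl_of_not_mem (hB2 i b hc2 hbm)
          omega
      · by_cases hal : a = l
        · subst hal
          have h1 : dd (inr a : P ⊕ L) (inl p) = 1 := dd_inr_inl_of_mem hpl
          have h2 : dd (inl b : P ⊕ L) (inl p') = 2 := dd_inl_inl_of_ne (hB1 i b hc2)
          omega
        · have h3 : dd (inr a : P ⊕ L) (inl p) = 3 :=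
            dd_inr_inl_of_not_mem (hA2 i a hc1 hal)
          omega
      · by_cases hal : a = l
        · subst hal
          have hbm : b ≠ m := by
            intro hbm; subst hbm
            rw [hc1, hc2, dd_self, dd_self] at hfi; omega
          have h1 : dd (inr a : P ⊕ L) (inl p) = 1 := dd_inr_inl_of_mem hpl
          have h3 : dd (inr b : P ⊕ L) (inl p') = 3 :=
            dd_inr_inl_of_not_mem (hB2 i b hc2 hbm)
          omega
        · have h3 : dd (inr a : P ⊕ L) (inl p) = 3 :=
            dd_inr_inl_of_not_mem (hA2 i a hc1 hal)
          omega

end Escape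

section Part2
open Configuration Configuration.ProjectivePlane
variable {P L : Type*} [Membership P L] [Fintype P] [Fintype L] [ProjectivePlane P L]

lemma Dbox_self (r : (P ⊕ L) × (P ⊕ L)) : Dbox r r = 0 := by
  simp [Dbox, dd_self]

lemma noCatch2 {k : ℕ} (hk : k ≤ order P L) :
    ∀ (n : ℕ) (cops : Fin k → (P ⊕ L) × (P ⊕ L)) (r : (P ⊕ L) × (P ⊕ L)),
      Homog r → (∀ i, 3 ≤ Dbox (cops i) r) →
      ¬ CanCatch (incidenceGraph P L □ incidenceGraph P L) 2 2 n cops r := by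
  intro n
  induction n with
  | zero =>
    rintro cops r hH hsafe ⟨i, hi⟩
    have := hsafe i
    rw [hi, Dbox_self] at this
    omega
  | succ n ih =>
    rintro cops r hH hsafe (⟨i, hi⟩ | ⟨cops', hstep, hrest⟩)
    · have := hsafe i
      rw [hi, Dbox_self] at this
      omega
    · have hfar' : ∀ i, 1 ≤ Dbox (cops' i) r := by
        intro i
        obtain ⟨w, hw⟩ := hstep i
        have h1 : Dbox (cops i) (cops' i) ≤ 2 := le_trans (Dbox_le_length w) hw
        have h2 := Dbox_triangle (cops i) (cops' i) r
        have := hsafe i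
        omega
      rcases hrest with ⟨i, hi⟩ | hresp
      · have := hfar' i
        rw [hi, Dbox_self] at this
        omega
      · obtain ⟨r', hrs, hH', hsafe'⟩ := escape hk cops' r hH hfar'
        exact ih cops' r' hH' hsafe' (hresp r' hrs)

lemma part2 {q : ℕ} (_hq : 2 ≤ q) (horder : order P L = q) :
    q + 1 ≤ copNumber (incidenceGraph P L □ incidenceGraph P L) 2 2 := by
  classical
  rw [copNumber]
  apply le_csInf
  · refine ⟨Fintype.card ((P ⊕ L) × (P ⊕ L)), (Fintype.equivFin _).symm, fun r => ⟨0, ?_⟩⟩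
    exact ⟨(Fintype.equivFin _) r, by simp⟩
  · rintro k ⟨cops, hwin⟩
    by_contra hlt
    push_neg at hlt
    have hk : k ≤ order P L := by omega
    have hcardP : ∀ l : L, (Finset.univ.filter fun p : P => p ∈ l).card = order P L + 1 := by
      intro l
      have h1 := pointCount_eq P l
      rwa [pointCount, Nat.card_eq_fintype_card, Fintype.card_subtype] at h1
    set F1 : Fin k → Finset P := fun i =>
      Sum.elim (fun a => {a}) (fun a => Finset.univ.filter fun x => x ∈ a) ((cops i).1) with hF1
    set F2 : Fin k → Finset P := fun i =>
      Sum.elim (fun a => {a}) (fun a => Finset.univ.filter fun x => x ∈ a) ((cops i).2) with hF2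
    have hFc : ∀ (c : P ⊕ L),
        (Sum.elim (fun a => ({a} : Finset P))
          (fun a => Finset.univ.filter fun x => x ∈ a) c).card ≤ order P L + 1 := by
      rintro (a | a)
      · simp
      · simp only [Sum.elim_inr]
        rw [hcardP a]
    obtain ⟨p, hp⟩ := exists_point_avoiding hk F1 fun i => hFc _
    obtain ⟨p', hp'⟩ := exists_point_avoiding hk F2 fun i => hFc _
    have hdd : ∀ (c : P ⊕ L) (x : P),
        x ∉ (Sum.elim (fun a => ({a} : Finset P))
          (fun a => Finset.univ.filter fun y => y ∈ a) c) → 2 ≤ dd c (inl x) := by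
      rintro (a | a) x hx
      · simp only [Sum.elim_inl, Finset.mem_singleton] at hx
        rw [dd_inl_inl_of_ne (Ne.symm hx)]
      · simp only [Sum.elim_inr, Finset.mem_filter, Finset.mem_univ, true_and] at hx
        rw [dd_inr_inl_of_not_mem hx]
        omega
    have hsafe : ∀ i, 3 ≤ Dbox (cops i) (inl p, inl p') := by
      intro i
      have h1 := hdd ((cops i).1) p (hp i)
      have h2 := hdd ((cops i).2) p' (hp' i)
      simp only [Dbox]
      omega
    obtain ⟨n, hc⟩ := hwin (inl p, inl p')
    exact noCatch2 hk n cops _ (Or.inl ⟨p, p', rfl⟩) hsafe hc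

end Part2

section Part1
open Configuration Configuration.ProjectivePlane
variable {P L : Type*} [Membership P L] [Fintype P] [Fintype L] [ProjectivePlane P L]

/-- safe configurations for the robber against a single cop -/
def SafeI (c r : P ⊕ L) : Prop :=
  (∃ p m, c = inl p ∧ r = inr m ∧ p ∉ m) ∨ (∃ x l, c = inr l ∧ r = inl x ∧ x ∉ l)

lemma SafeI_dd {c r : P ⊕ L} (h : SafeI c r) : dd c r = 3 := by
  rcases h with ⟨p, m, rfl, rfl, hnm⟩ | ⟨x, l, rfl, rfl, hnm⟩
  · exact dd_inl_inr_of_not_mem hnm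
  · exact dd_inr_inl_of_not_mem hnm

lemma noCatch0 : ∀ (n : ℕ) (cops : Fin 0 → P ⊕ L) (r : P ⊕ L),
    ¬ CanCatch (incidenceGraph P L) 2 2 n cops r := by
  intro n
  induction n with
  | zero => rintro cops r ⟨i, -⟩; exact i.elim0
  | succ n ih =>
    rintro cops r (⟨i, -⟩ | ⟨cops', -, hrest⟩)
    · exact i.elim0
    · rcases hrest with ⟨i, -⟩ | hresp
      · exact i.elim0
      · exact ih cops' r (hresp r ⟨.nil, by simp, by simp⟩)

lemma noCatch1 : ∀ (n : ℕ) (cops : Fin 1 → P ⊕ L) (r : P ⊕ L),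
    SafeI (cops 0) r → ¬ CanCatch (incidenceGraph P L) 2 2 n cops r := by
  have hk1 : 1 ≤ order P L := le_of_lt (one_lt_order P L)
  intro n
  induction n with
  | zero =>
    rintro cops r hsafe ⟨i, hi⟩
    rw [Fin.fin_one_eq_zero i] at hi
    rcases hsafe with ⟨p, m, hc, rfl, -⟩ | ⟨x, l, hc, rfl, -⟩ <;> rw [hc] at hi <;> simp at hi
  | succ n ih =>
    rintro cops r hsafe (⟨i, hi⟩ | ⟨cops', hstep, hrest⟩)
    · rw [Fin.fin_one_eq_zero i] at hi
      rcases hsafe with ⟨p, m, hc, rfl, -⟩ | ⟨x, l, hc, rfl, -⟩ <;> rw [hc] at hi <;> simp at hi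
    · have hne : cops' 0 ≠ r := by
        intro he
        obtain ⟨w, hw⟩ := hstep 0
        have h1 := dd_le_length w
        have h2 := dd_triangle (cops 0) (cops' 0) r
        rw [SafeI_dd hsafe] at h2
        have h3 : dd (cops' 0) r = 0 := by rw [he, dd_self]
        omega
      rcases hrest with ⟨i, hi⟩ | hresp
      · rw [Fin.fin_one_eq_zero i] at hi
        exact hne hi
      · have hmemS : ∀ y : P ⊕ L, y ∈ {x | ∃ i : Fin 1, cops' i = x} → cops' 0 = y := by
          rintro y ⟨i, hi⟩
          rw [Fin.fin_one_eq_zero i] at hi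
          exact hi
        rcases hsafe with ⟨pp, mm, hc, hr, hnotmem⟩ | ⟨xx, ll, hc, hr, hnotmem⟩
        · subst hr
          rcases hc' : cops' 0 with p' | l'
          · by_cases hpm : p' ∈ mm
            · obtain ⟨x, hxm, hxi⟩ := exists_point_on_avoiding hk1 mm (fun _ : Fin 1 => p')
              have hx : x ≠ p' := hxi 0
              obtain ⟨m', hxm', hm'i⟩ :=
                exists_line_through_avoiding hk1 x (fun _ : Fin 1 => HasLines.mkLine hx)
              have hp'm' : p' ∉ m' := fun hmem => hm'i 0 (line_unique hx hxm' hmem)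
              refine ih cops' (inr m') (Or.inl ⟨p', m', hc', rfl, hp'm'⟩) (hresp _
                ⟨.cons (ig_adj_inr_inl hxm) (.cons (ig_adj_inl_inr hxm') .nil), by simp, ?_⟩)
              intro y hy hyS
              have := hmemS y hyS
              rw [hc'] at this
              simp only [SimpleGraph.Walk.support_cons, SimpleGraph.Walk.support_nil,
                List.tail_cons, List.mem_cons, List.not_mem_nil, or_false,
                List.mem_singleton] at hy
              rcases hy with rfl | rfl
              · rw [inl.injEq] at this; exact hx this.symm
              · simp at this
            · exact ih cops' (inr mm) (Or.inl ⟨p', mm, hc', rfl, hpm⟩)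
                (hresp _ ⟨.nil, by simp, by simp⟩)
          · have hlm : mm ≠ l' := by
              intro h; subst h; exact hne hc'
            obtain ⟨x, hxmm, hxi⟩ :=
              exists_point_on_avoiding hk1 mm (fun _ : Fin 1 => HasPoints.mkPoint hlm)
            have hxl' : x ∉ l' := fun hmem => hxi 0 (point_unique hlm hxmm hmem)
            refine ih cops' (inl x) (Or.inr ⟨x, l', hc', rfl, hxl'⟩) (hresp _
              ⟨.cons (ig_adj_inr_inl hxmm) .nil, by simp, ?_⟩)
            intro y hy hyS
            have := hmemS y hyS
            rw [hc'] at this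
            simp only [SimpleGraph.Walk.support_cons, SimpleGraph.Walk.support_nil,
              List.tail_cons, List.mem_singleton, List.mem_cons, List.not_mem_nil,
              or_false] at hy
            subst hy
            simp at this
        · subst hr
          rcases hc' : cops' 0 with p' | l'
          · have hne' : xx ≠ p' := by
              intro h; subst h; exact hne (by rw [hc'])
            obtain ⟨m'', hxm'', hi''⟩ :=
              exists_line_through_avoiding hk1 xx (fun _ : Fin 1 => HasLines.mkLine hne')
            have hp'm'' : p' ∉ m'' := fun hmem => hi'' 0 (line_unique hne' hxm'' hmem)
            refine ih cops' (inr m'') (Or.inl ⟨p', m'', hc', rfl, hp'm''⟩) (hresp _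
              ⟨.cons (ig_adj_inl_inr hxm'') .nil, by simp, ?_⟩)
            intro y hy hyS
            have := hmemS y hyS
            rw [hc'] at this
            simp only [SimpleGraph.Walk.support_cons, SimpleGraph.Walk.support_nil,
              List.tail_cons, List.mem_singleton, List.mem_cons, List.not_mem_nil,
              or_false] at hy
            subst hy
            simp at this
          · by_cases hxl' : xx ∈ l'
            · obtain ⟨l'', hxl'', hne''⟩ :=
                exists_line_through_avoiding hk1 xx (fun _ : Fin 1 => l')
              have hll : l'' ≠ l' := hne'' 0
              obtain ⟨x', hx'l'', hx'i⟩ :=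
                exists_point_on_avoiding hk1 l'' (fun _ : Fin 1 => HasPoints.mkPoint hll)
              have hx'l' : x' ∉ l' := fun hmem => hx'i 0 (point_unique hll hx'l'' hmem)
              refine ih cops' (inl x') (Or.inr ⟨x', l', hc', rfl, hx'l'⟩) (hresp _
                ⟨.cons (ig_adj_inl_inr hxl'') (.cons (ig_adj_inr_inl hx'l'') .nil), by simp, ?_⟩)
              intro y hy hyS
              have := hmemS y hyS
              rw [hc'] at this
              simp only [SimpleGraph.Walk.support_cons, SimpleGraph.Walk.support_nil,
                List.tail_cons, List.mem_cons, List.not_mem_nil, or_false,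
                List.mem_singleton] at hy
              rcases hy with rfl | rfl
              · rw [inr.injEq] at this; exact hll this.symm
              · simp at this
            · exact ih cops' (inl xx) (Or.inr ⟨xx, l', hc', rfl, hxl'⟩)
                (hresp _ ⟨.nil, by simp, by simp⟩)

lemma two_cops_win :
    ∃ cops : Fin 2 → P ⊕ L, ∀ r : P ⊕ L, ∃ n, CanCatch (incidenceGraph P L) 2 2 n cops r := by
  have hP : Nonempty P := by
    rw [← Fintype.card_pos_iff, card_points P L]
    positivity
  obtain ⟨p0⟩ := hP
  obtain ⟨l0, -⟩ := Nondegenerate.exists_line (L := L) p0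
  refine ⟨fun i => if i = 0 then inl p0 else inr l0, fun r => ⟨1, Or.inr ?_⟩⟩
  rcases r with p | l
  · refine ⟨fun i => if i = 0 then inl p else inr l0, fun i => ?_, Or.inl ⟨0, by simp⟩⟩
    by_cases hi : i = 0
    · subst hi
      simp only [if_pos rfl]
      by_cases hp : p0 = p
      · subst hp; exact ⟨.nil, by simp⟩
      · exact ⟨.cons (ig_adj_inl_inr (HasLines.mkLine_ax hp).1)
          (.cons (ig_adj_inr_inl (HasLines.mkLine_ax hp).2) .nil), by simp⟩
    · simp only [if_neg hi]
      exact ⟨.nil, by simp⟩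
  · refine ⟨fun i => if i = 0 then inl p0 else inr l, fun i => ?_, Or.inl ⟨1, by simp⟩⟩
    by_cases hi : i = 0
    · subst hi
      simp only [if_pos rfl]
      exact ⟨.nil, by simp⟩
    · simp only [if_neg hi]
      by_cases hl : l0 = l
      · subst hl; exact ⟨.nil, by simp⟩
      · exact ⟨.cons (ig_adj_inr_inl (HasPoints.mkPoint_ax hl).1)
          (.cons (ig_adj_inl_inr (HasPoints.mkPoint_ax hl).2) .nil), by simp⟩

lemma part1 : copNumber (incidenceGraph P L) 2 2 = 2 := by
  have h2 : (2 : ℕ) ∈ {k : ℕ | ∃ cops : Fin k → P ⊕ L,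
      ∀ r : P ⊕ L, ∃ n : ℕ, CanCatch (incidenceGraph P L) 2 2 n cops r} := two_cops_win
  rw [copNumber]
  apply le_antisymm
  · exact Nat.sInf_le h2
  · apply le_csInf ⟨2, h2⟩
    rintro k ⟨cops, hwin⟩
    by_contra hlt
    push_neg at hlt
    interval_cases k
    · have hP : Nonempty P := by
        rw [← Fintype.card_pos_iff, card_points P L]
        positivity
      obtain ⟨p0⟩ := hP
      obtain ⟨n, hc⟩ := hwin (inl p0)
      exact noCatch0 n cops (inl p0) hc
    · rcases hc : cops 0 with p | l
      · obtain ⟨l, hpl⟩ := Nondegenerate.exists_line (L := L) p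
        obtain ⟨n, hcc⟩ := hwin (inr l)
        exact noCatch1 n cops (inr l) (Or.inl ⟨p, l, hc, rfl, hpl⟩) hcc
      · obtain ⟨x, hxl⟩ := Nondegenerate.exists_point (P := P) l
        obtain ⟨n, hcc⟩ := hwin (inl x)
        exact noCatch1 n cops (inl x) (Or.inr ⟨x, l, hc, rfl, hxl⟩) hcc

end Part1

/-- If `P` is the incidence graph of a finite projective plane of order `q ≥ 2`, then
`c_{2,2}(P) = 2` but `c_{2,2}(P □ P) ≥ q + 1`. -/
theorem statement10 (q : ℕ) (hq : 2 ≤ q) (P L : Type*) [Membership P L]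
    [Fintype P] [Fintype L] [Configuration.ProjectivePlane P L]
    (horder : Configuration.ProjectivePlane.order P L = q) :
    copNumber (incidenceGraph P L) 2 2 = 2 ∧
    q + 1 ≤ copNumber (incidenceGraph P L □ incidenceGraph P L) 2 2 :=
  ⟨part1, part2 hq horder⟩
end

section
/- For all integers s ≥ 2 and d ≥ 2s, the d-dimensional hypercube satisfies c_{s,s}(Q_d) ≤ ⌈(d − 2s + 3)/2⌉. -/
open SimpleGraph

variable {V : Type*}

/-- The Cartesian (box) product of the family of graphs `T i`, `i : Fin d`. -/
def boxPi {d : ℕ} {V : Fin d → Type*} (T : ∀ i, SimpleGraph (V i)) :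
    SimpleGraph (∀ i, V i) where
  Adj x y := ∃ i, (T i).Adj (x i) (y i) ∧ ∀ j, j ≠ i → x j = y j
  symm := by
    constructor
    rintro x y ⟨i, h, h'⟩
    exact ⟨i, h.symm, fun j hj => (h' j hj).symm⟩
  loopless := by constructor; rintro x ⟨i, h, -⟩; exact absurd h (SimpleGraph.irrefl _)

/-- The `d`-dimensional hypercube `Q_d`, the `d`-fold Cartesian product of `K₂`. -/
def hypercube (d : ℕ) : SimpleGraph (Fin d → Bool) :=
  boxPi fun _ : Fin d => (⊤ : SimpleGraph Bool)

open Finset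

namespace S14

variable {d : ℕ}

abbrev Vtx (d : ℕ) := Fin d → Bool

/-- disagreement count on a block -/
def dS (S : Finset (Fin d)) (x y : Vtx d) : ℕ := (S.filter fun i => x i ≠ y i).card

lemma dS_comm (S : Finset (Fin d)) (x y : Vtx d) : dS S x y = dS S y x := by
  unfold dS; congr 1; apply filter_congr; intro i _; simp [ne_comm]

lemma dS_le_card (S : Finset (Fin d)) (x y : Vtx d) : dS S x y ≤ S.card :=
  card_filter_le _ _

lemma dS_self (S : Finset (Fin d)) (x : Vtx d) : dS S x x = 0 := by
  simp [dS]

lemma dS_triangle (S : Finset (Fin d)) (x y z : Vtx d) :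
    dS S x z ≤ dS S x y + dS S y z := by
  unfold dS
  have hsub : (S.filter fun i => x i ≠ z i) ⊆
      (S.filter fun i => x i ≠ y i) ∪ (S.filter fun i => y i ≠ z i) := by
    intro i hi
    simp only [mem_filter, mem_union] at *
    rcases hi with ⟨hiS, hxz⟩
    by_cases h : x i = y i
    · exact Or.inr ⟨hiS, fun hy => hxz (h.trans hy)⟩
    · exact Or.inl ⟨hiS, h⟩
  exact le_trans (card_le_card hsub) (card_union_le _ _)

lemma dS_congr_left {S : Finset (Fin d)} {x x' y : Vtx d}
    (h : ∀ i ∈ S, x i = x' i) : dS S x y = dS S x' y := by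
  unfold dS; congr 1; apply filter_congr; intro i hi; rw [h i hi]

/-- split over a sub-block -/
lemma dS_split (P : Finset (Fin d)) (x y : Vtx d) :
    dS univ x y = dS (univ \ P) x y + dS P x y := by
  unfold dS
  rw [← card_union_of_disjoint]
  · congr 1
    ext i
    simp only [mem_union, mem_filter, mem_sdiff, mem_univ, true_and]
    tauto
  · refine disjoint_filter_filter ?_
    exact sdiff_disjoint

lemma dS_eq_zero_iff {S : Finset (Fin d)} {x y : Vtx d} :
    dS S x y = 0 ↔ ∀ i ∈ S, x i = y i := by
  unfold dS
  rw [card_eq_zero, filter_eq_empty_iff]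
  simp

/-- full Hamming distance -/
def dH (x y : Vtx d) : ℕ := dS univ x y

lemma dH_eq_zero_iff {x y : Vtx d} : dH x y = 0 ↔ x = y := by
  rw [dH, dS_eq_zero_iff]
  constructor
  · intro h; funext i; exact h i (mem_univ i)
  · intro h i _; rw [h]

/-- adjacency gives distance ≤ 1 -/
lemma dH_le_one_of_adj {x y : Vtx d} (h : (hypercube d).Adj x y) : dH x y ≤ 1 := by
  obtain ⟨i0, -, hoth⟩ := h
  have : (univ.filter fun i => x i ≠ y i) ⊆ {i0} := by
    intro i hi
    simp only [mem_filter, mem_univ, true_and] at hi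
    simp only [mem_singleton]
    by_contra hne
    exact hi (hoth i hne)
  calc dH x y ≤ ({i0} : Finset (Fin d)).card := card_le_card this
  _ = 1 := card_singleton _

/-- walk length dominates Hamming distance -/
lemma dH_le_walk_length {x y : Vtx d} (p : (hypercube d).Walk x y) :
    dH x y ≤ p.length := by
  induction p with
  | nil => simp [dH, dS_self]
  | cons h p ih =>
    rename_i u v w
    calc dH u w ≤ dH u v + dH v w := dS_triangle _ _ _ _
    _ ≤ 1 + p.length := Nat.add_le_add (dH_le_one_of_adj h) ih
    _ = _ := by simp [Nat.add_comm]

/-- there is a walk realizing the Hamming distance -/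
lemma exists_walk_dH (x y : Vtx d) : ∃ p : (hypercube d).Walk x y, p.length = dH x y := by
  generalize hn : dH x y = n
  induction n generalizing x with
  | zero =>
    have : x = y := dH_eq_zero_iff.mp hn
    subst this; exact ⟨Walk.nil, rfl⟩
  | succ n ih =>
    have hne : (univ.filter fun i => x i ≠ y i).Nonempty := by
      rw [← card_pos, ← dS, ← dH, hn]; omega
    obtain ⟨i0, hi0⟩ := hne
    simp only [mem_filter, mem_univ, true_and] at hi0
    set z : Vtx d := Function.update x i0 (y i0) with hz
    have hadj : (hypercube d).Adj x z := by
      refine ⟨i0, ?_, ?_⟩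
      · simp only [SimpleGraph.top_adj, hz, Function.update_self]
        exact hi0
      · intro j hj
        simp [hz, Function.update_of_ne hj]
    have hzd : dH z y = n := by
      have hset : (univ.filter fun i => z i ≠ y i)
          = (univ.filter fun i => x i ≠ y i) \ {i0} := by
        ext i
        simp only [mem_filter, mem_univ, true_and, mem_sdiff, mem_singleton]
        by_cases h : i = i0
        · subst h; simp [hz, Function.update_self]
        · simp [hz, Function.update_of_ne h, h]
      have : dH z y = (univ.filter fun i => x i ≠ y i).card - 1 := by
        rw [dH, dS, hset, card_sdiff_of_subset (by simpa using hi0)]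
        simp
      rw [this, ← dS, ← dH, hn]
      omega
    obtain ⟨p, hp⟩ := ih z hzd
    exact ⟨Walk.cons hadj p, by simp [hp, hzd]⟩

lemma copStep_of_dH_le {x y : Vtx d} {s : ℕ} (h : dH x y ≤ s) :
    copStep (hypercube d) s x y := by
  obtain ⟨p, hp⟩ := exists_walk_dH x y
  exact ⟨p, by omega⟩

lemma dH_le_of_robberStep {x y : Vtx d} {s : ℕ} {S : Set (Vtx d)}
    (h : robberStep (hypercube d) s S x y) : dH x y ≤ s := by
  obtain ⟨p, hp, -⟩ := h
  exact le_trans (dH_le_walk_length p) hp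

/-! flipping a set of coordinates -/

def flipSet (x : Vtx d) (T : Finset (Fin d)) : Vtx d :=
  fun i => if i ∈ T then !(x i) else x i

lemma dH_flipSet (x : Vtx d) (T : Finset (Fin d)) : dH (flipSet x T) x = T.card := by
  rw [dH, dS]
  congr 1
  ext i
  by_cases h : i ∈ T <;> simp [flipSet, h]

/-- flipping disagreements inside the block removes them -/
lemma dS_flipSet_sub {S T : Finset (Fin d)} {x y : Vtx d}
    (hT : T ⊆ S.filter fun i => x i ≠ y i) :
    dS S (flipSet x T) y = dS S x y - T.card := by
  have hset : (S.filter fun i => flipSet x T i ≠ y i)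
      = (S.filter fun i => x i ≠ y i) \ T := by
    ext i
    simp only [mem_filter, mem_sdiff]
    by_cases h : i ∈ T
    · have := hT h
      simp only [mem_filter] at this
      simp only [flipSet, h, if_pos]
      constructor
      · rintro ⟨-, hc⟩
        exfalso
        apply hc
        rw [show y i = !(x i) by revert this; cases x i <;> cases y i <;> simp]
      · tauto
    · simp [flipSet, h]
  rw [dS, hset, card_sdiff_of_subset (hT.trans (by intro i hi; exact hi))]
  rfl

/-- flipping agreements inside the block adds them -/
lemma dS_flipSet_add {S T : Finset (Fin d)} {x y : Vtx d}
    (hT : T ⊆ S.filter fun i => x i = y i) :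
    dS S (flipSet x T) y = dS S x y + T.card := by
  have hset : (S.filter fun i => flipSet x T i ≠ y i)
      = (S.filter fun i => x i ≠ y i) ∪ T := by
    ext i
    simp only [mem_filter, mem_union]
    by_cases h : i ∈ T
    · have := hT h
      simp only [mem_filter] at this
      simp only [flipSet, h, if_pos]
      constructor
      · tauto
      · intro _
        refine ⟨this.1, ?_⟩
        rw [this.2]; cases y i <;> simp
    · simp [flipSet, h]
  rw [dS, hset, card_union_of_disjoint]
  · rfl
  · rw [disjoint_right]
    intro i hiT hif
    have := hT hiT
    simp only [mem_filter] at this hif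
    exact hif.2 this.2

/-- flipping outside the block doesn't change the count -/
lemma dS_flipSet_disj {S T : Finset (Fin d)} {x y : Vtx d}
    (hT : Disjoint T S) :
    dS S (flipSet x T) y = dS S x y := by
  apply dS_congr_left
  intro i hi
  have : i ∉ T := by
    intro hc; exact absurd hi (Finset.disjoint_left.mp hT hc)
  simp [flipSet, this]

/-- the high block -/
def Pb (f : ℕ) : Finset (Fin d) := univ.filter (fun i => f ≤ i.val)

/-- the `j`-th pair -/
def Pset (f : ℕ) {m : ℕ} (j : Fin m) : Finset (Fin d) :=
  univ.filter (fun i => i.val = f + 2*j.val ∨ i.val = f + 2*j.val + 1)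

lemma card_lowblock {f : ℕ} (hfd : f ≤ d) :
    ((univ : Finset (Fin d)).filter (fun i => i.val < f)).card = f := by
  have : ((univ : Finset (Fin d)).filter (fun i => i.val < f)).card
      = (univ : Finset (Fin f)).card := by
    apply Finset.card_bij
      (fun (i : Fin d) (hi : i ∈ (univ : Finset (Fin d)).filter (fun i => i.val < f)) =>
        (⟨i.val, by simpa using hi⟩ : Fin f))
    · intro a ha; exact mem_univ _
    · intro a ha b hb hab
      simp only [Fin.mk.injEq] at hab
      exact Fin.ext hab
    · intro b _
      refine ⟨⟨b.val, by omega⟩, by simp [b.isLt], rfl⟩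
  rw [this, Finset.card_univ, Fintype.card_fin]

lemma card_compl_Pb {f m : ℕ} (hd : d = f + 2*m) :
    ((univ : Finset (Fin d)) \ Pb f).card = f := by
  have h : (univ : Finset (Fin d)) \ Pb f = univ.filter (fun i => i.val < f) := by
    ext i
    simp only [mem_sdiff, mem_univ, true_and, Pb, mem_filter]
    omega
  rw [h, card_lowblock (by omega)]

lemma Pb_eq_biUnion {f m : ℕ} (hd : d = f + 2*m) (x y : Vtx d) :
    dS (Pb f) x y = ∑ j : Fin m, dS (Pset f j) x y := by
  unfold dS
  have key : ((Pb f).filter (fun i => x i ≠ y i)).card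
      = ∑ j ∈ Finset.range m,
        (((Pb f).filter (fun i => x i ≠ y i)).filter
          (fun i => (i.val - f)/2 = j)).card := by
    apply Finset.card_eq_sum_card_fiberwise
    intro i hi
    simp only [Finset.mem_coe, mem_filter, Pb, mem_univ, true_and] at hi
    have hiv := i.isLt
    simp only [Finset.mem_coe, Finset.mem_range]
    omega
  rw [key, ← Fin.sum_univ_eq_sum_range]
  apply Finset.sum_congr rfl
  intro j _
  congr 1
  ext i
  simp only [mem_filter, Pb, Pset, mem_univ, true_and]
  have hiv := i.isLt
  constructor
  · rintro ⟨⟨hfi, hne⟩, hj⟩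
    refine ⟨?_, hne⟩
    omega
  · rintro ⟨hor, hne⟩
    refine ⟨⟨by omega, hne⟩, by omega⟩

/-- coordinates of pair j -/
def c1 {f m : ℕ} (hd : d = f + 2*m) (j : Fin m) : Fin d := ⟨f + 2*j.val, by omega⟩
def c2 {f m : ℕ} (hd : d = f + 2*m) (j : Fin m) : Fin d := ⟨f + 2*j.val + 1, by omega⟩

lemma Pset_eq {f m : ℕ} (hd : d = f + 2*m) (j : Fin m) :
    Pset f j = ({c1 hd j, c2 hd j} : Finset (Fin d)) := by
  ext i
  simp only [Pset, mem_filter, mem_univ, true_and, mem_insert, mem_singleton, c1, c2]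
  constructor
  · rintro (h | h)
    · left; exact Fin.ext h
    · right; exact Fin.ext h
  · rintro (h | h)
    · left; rw [h]
    · right; rw [h]

lemma c1_ne_c2 {f m : ℕ} (hd : d = f + 2*m) (j : Fin m) : c1 hd j ≠ c2 hd j := by
  simp only [c1, c2, ne_eq, Fin.mk.injEq]; omega

lemma dS_pair {f m : ℕ} (hd : d = f + 2*m) (j : Fin m) (x y : Vtx d) :
    dS (Pset f j) x y = (if x (c1 hd j) ≠ y (c1 hd j) then 1 else 0)
      + (if x (c2 hd j) ≠ y (c2 hd j) then 1 else 0) := by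
  rw [dS, Pset_eq hd j]
  rw [filter_insert, filter_singleton]
  by_cases h1 : x (c1 hd j) ≠ y (c1 hd j) <;> by_cases h2 : x (c2 hd j) ≠ y (c2 hd j) <;>
    simp [h1, h2, c1_ne_c2 hd j]

lemma card_Pset {f m : ℕ} (hd : d = f + 2*m) (j : Fin m) : (Pset f j (d := d)).card = 2 := by
  rw [Pset_eq hd j, card_insert_of_notMem (by simp [c1_ne_c2 hd j]), card_singleton]

lemma Pset_subset_Pb {f m : ℕ} (j : Fin m) : Pset f j (d := d) ⊆ Pb f := by
  intro i hi
  simp only [Pset, Pb, mem_filter, mem_univ, true_and] at *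
  omega

/-- boolean pair relation -/
lemma pairRel (h1 h2 r1 r2 s1 s2 : Bool) :
    (((if r1 ≠ s1 then 1 else 0) + (if r2 ≠ s2 then 1 else 0) : ℕ) = 0 →
      ((if h1 ≠ s1 then 1 else 0) + (if h2 ≠ s2 then 1 else 0) : ℕ)
        = (if h1 ≠ r1 then 1 else 0) + (if h2 ≠ r2 then 1 else 0)) ∧
    (((if r1 ≠ s1 then 1 else 0) + (if r2 ≠ s2 then 1 else 0) : ℕ) = 1 →
      (((if h1 ≠ s1 then 1 else 0) + (if h2 ≠ s2 then 1 else 0) : ℕ)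
          = ((if h1 ≠ r1 then 1 else 0) + (if h2 ≠ r2 then 1 else 0)) + 1 ∨
        ((if h1 ≠ s1 then 1 else 0) + (if h2 ≠ s2 then 1 else 0) : ℕ) + 1
          = (if h1 ≠ r1 then 1 else 0) + (if h2 ≠ r2 then 1 else 0))) ∧
    (((if r1 ≠ s1 then 1 else 0) + (if r2 ≠ s2 then 1 else 0) : ℕ) = 2 →
      ((if h1 ≠ s1 then 1 else 0) + (if h2 ≠ s2 then 1 else 0) : ℕ)
        + ((if h1 ≠ r1 then 1 else 0) + (if h2 ≠ r2 then 1 else 0)) = 2) := by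
  rcases h1 <;> rcases h2 <;> rcases r1 <;> rcases r2 <;> rcases s1 <;> rcases s2 <;> simp

/-- the pure arithmetic pair-decrease -/
lemma pairDec (s g' delp gct delct pj c : ℕ)
    (hdelp : delp ≤ 2) (hdelct : delct ≤ 2) (hpj : pj ≤ 2) (hc : c ≤ s)
    (hT2 : gct ≤ g' + (c - pj)) (hpjc : pj ≤ c)
    (hT3 : delp ≤ delct + pj)
    (hrel0 : pj = 0 → delct = delp)
    (hrel1 : pj = 1 → (delct = delp + 1 ∨ delct + 1 = delp))
    (hrel2 : pj = 2 → delct + delp = 2)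
    (hsurv : s + 1 ≤ gct + delct) :
    (pj = 0 → 2*(gct - min s gct) + (2 - min (delct + (s - min s gct)) 2)
        ≤ 2*g' + (2 - delp)) ∧
    (1 ≤ pj → 2*(gct - min s gct) + (2 - min (delct + (s - min s gct)) 2) + 1
        ≤ 2*g' + (2 - delp)) := by
  omega


end S14

namespace S14

lemma dH_comm {d : ℕ} (x y : Vtx d) : dH x y = dH y x := dS_comm _ x y

section Strategy

variable {d : ℕ}

def INV (f : ℕ) (A B : Vtx d) : Prop :=
  (∀ i : Fin d, i.val < f → A i = false ∧ B i = true) ∧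
  (∀ i : Fin d, f ≤ i.val → A i = B i)

def nuP (s g δ : ℕ) : ℕ := 2*(g - min s g) + (2 - min (δ + (s - min s g)) 2)

def nu (s f : ℕ) {m : ℕ} (A : Vtx d) (H : Fin m → Vtx d) (r : Vtx d) : ℕ :=
  (dS (Pb f) A r - min s (dS (Pb f) A r)) +
    ∑ j : Fin m, nuP s (dS (univ \ Pset f j) (H j) r) (dS (Pset f j) (H j) r)

variable {f m s : ℕ}

lemma policy (hd : d = f + 2*m) (A B : Vtx d) (H : Fin m → Vtx d) (r : Vtx d)
    (hinv : INV f A B) :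
    ∃ (A' B' : Vtx d) (H' : Fin m → Vtx d),
      dH A A' ≤ s ∧ dH B B' ≤ s ∧ (∀ j, dH (H j) (H' j) ≤ s) ∧
      INV f A' B' ∧
      dS (Pb f) A' r = dS (Pb f) A r - min s (dS (Pb f) A r) ∧
      (∀ j, dS (univ \ Pset f j) (H' j) r
          = dS (univ \ Pset f j) (H j) r - min s (dS (univ \ Pset f j) (H j) r) ∧
        dS (Pset f j) (H' j) r
          = min (dS (Pset f j) (H j) r + (s - min s (dS (univ \ Pset f j) (H j) r))) 2) := by
  classical
  have hex : ∀ j : Fin m, ∃ h' : Vtx d,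
      dH (H j) h' ≤ s ∧
      dS (univ \ Pset f j) h' r
        = dS (univ \ Pset f j) (H j) r - min s (dS (univ \ Pset f j) (H j) r) ∧
      dS (Pset f j) h' r
        = min (dS (Pset f j) (H j) r + (s - min s (dS (univ \ Pset f j) (H j) r))) 2 := by
    intro j
    have hδ2 : dS (Pset f j) (H j) r ≤ 2 :=
      le_trans (dS_le_card _ _ _) (le_of_eq (card_Pset hd j))
    obtain ⟨T1, hT1sub, hT1card⟩ := Finset.exists_subset_card_eq
      (show min s (dS (univ \ Pset f j) (H j) r)
          ≤ ((univ \ Pset f j).filter fun i => H j i ≠ r i).card from Nat.min_le_right _ _)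
    have hT1out : T1 ⊆ univ \ Pset f j := hT1sub.trans (filter_subset _ _)
    have hd1 : Disjoint T1 (Pset f j) := by
      rw [Finset.disjoint_left]
      intro i hi hip
      have := hT1out hi
      rw [mem_sdiff] at this
      exact this.2 hip
    have e1 : dS (univ \ Pset f j) (flipSet (H j) T1) r
        = dS (univ \ Pset f j) (H j) r - min s (dS (univ \ Pset f j) (H j) r) := by
      rw [dS_flipSet_sub hT1sub, hT1card]
    have e2 : dS (Pset f j) (flipSet (H j) T1) r = dS (Pset f j) (H j) r :=
      dS_flipSet_disj hd1
    have hagree : ((Pset f j).filter fun i => flipSet (H j) T1 i = r i).card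
        = 2 - dS (Pset f j) (H j) r := by
      have hcc := Finset.card_filter_add_card_filter_not
        (s := Pset f j) (p := fun i => flipSet (H j) T1 i = r i)
      have h2 : (Pset f j (d := d)).card = 2 := card_Pset hd j
      have h3 : ((Pset f j).filter fun i => ¬ (flipSet (H j) T1 i = r i)).card
          = dS (Pset f j) (H j) r := by
        rw [← e2]; rfl
      omega
    obtain ⟨T2, hT2sub, hT2card⟩ := Finset.exists_subset_card_eq
      (show min (s - min s (dS (univ \ Pset f j) (H j) r)) (2 - dS (Pset f j) (H j) r)
          ≤ ((Pset f j).filter fun i => flipSet (H j) T1 i = r i).card from by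
        rw [hagree]; exact Nat.min_le_right _ _)
    have hT2P : T2 ⊆ Pset f j := hT2sub.trans (filter_subset _ _)
    have hd2 : Disjoint T2 (univ \ Pset f j) := by
      rw [Finset.disjoint_left]
      intro i hi hio
      rw [mem_sdiff] at hio
      exact hio.2 (hT2P hi)
    refine ⟨flipSet (flipSet (H j) T1) T2, ?_, ?_, ?_⟩
    · calc dH (H j) (flipSet (flipSet (H j) T1) T2)
          ≤ dH (H j) (flipSet (H j) T1)
            + dH (flipSet (H j) T1) (flipSet (flipSet (H j) T1) T2) :=
            dS_triangle _ _ _ _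
      _ = T1.card + T2.card := by
            rw [dH_comm (H j), dH_flipSet, dH_comm (flipSet (H j) T1), dH_flipSet]
      _ ≤ s := by rw [hT1card, hT2card]; omega
    · rw [dS_flipSet_disj hd2, e1]
    · rw [dS_flipSet_add hT2sub, e2, hT2card]
      omega
  choose H' hH' using hex
  obtain ⟨T, hTsub, hTcard⟩ := Finset.exists_subset_card_eq
    (show min s (dS (Pb f) A r) ≤ ((Pb f).filter fun i => A i ≠ r i).card from
      Nat.min_le_right _ _)
  have hTPb : T ⊆ Pb f := hTsub.trans (filter_subset _ _)
  refine ⟨flipSet A T, flipSet B T, H', ?_, ?_, fun j => (hH' j).1, ?_, ?_,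
    fun j => ⟨(hH' j).2.1, (hH' j).2.2⟩⟩
  · rw [dH_comm, dH_flipSet, hTcard]; exact Nat.min_le_left _ _
  · rw [dH_comm, dH_flipSet, hTcard]; exact Nat.min_le_left _ _
  · constructor
    · intro i hi
      have hiT : i ∉ T := by
        intro hc
        have := hTPb hc
        simp only [Pb, mem_filter, mem_univ, true_and] at this
        omega
      simp only [flipSet, hiT, if_neg, ite_false]
      exact hinv.1 i hi
    · intro i hi
      by_cases hiT : i ∈ T
      · simp only [flipSet, hiT, ite_true, hinv.2 i hi]
      · simp only [flipSet, hiT, ite_false, hinv.2 i hi]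
  · rw [dS_flipSet_sub hTsub, hTcard]

lemma decrease (hs : 1 ≤ s) (hf : f ≤ 2*s + 1) (hd : d = f + 2*m)
    (A' B' : Vtx d) (H' : Fin m → Vtx d) (r r' : Vtx d)
    (hinv : INV f A' B')
    (hc : dH r r' ≤ s)
    (hsA : s + 1 ≤ dH A' r') (hsB : s + 1 ≤ dH B' r')
    (hsH : ∀ j, s + 1 ≤ dH (H' j) r') :
    nu s f A' H' r' <
      dS (Pb f) A' r + ∑ j : Fin m,
        (2 * dS (univ \ Pset f j) (H' j) r + (2 - dS (Pset f j) (H' j) r)) := by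
  classical
  -- π ≤ c
  have hsplitrr : dH r r' = dS (univ \ Pb f) r r' + dS (Pb f) r r' := dS_split _ _ _
  have hπc : dS (Pb f) r r' ≤ dH r r' := by omega
  -- the A/B forcing
  have hsplitA : dH A' r' = dS (univ \ Pb f) A' r' + dS (Pb f) A' r' := dS_split _ _ _
  have hsplitB : dH B' r' = dS (univ \ Pb f) B' r' + dS (Pb f) B' r' := dS_split _ _ _
  have hBA : dS (Pb f) B' r' = dS (Pb f) A' r' := by
    apply dS_congr_left
    intro i hi
    have hfi : f ≤ i.val := by
      simpa [Pb] using hi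
    exact (hinv.2 i hfi).symm
  have hFsum : dS (univ \ Pb f) A' r' + dS (univ \ Pb f) B' r' = f := by
    have hA0 : dS (univ \ Pb f) A' r' = ((univ \ Pb f).filter fun i => r' i = true).card := by
      unfold dS
      congr 1
      apply filter_congr
      intro i hi
      have hlt : i.val < f := by
        rw [mem_sdiff] at hi
        have := hi.2
        simp only [Pb, mem_filter, mem_univ, true_and] at this
        omega
      rw [(hinv.1 i hlt).1]
      cases r' i <;> simp
    have hB1 : dS (univ \ Pb f) B' r' = ((univ \ Pb f).filter fun i => ¬ (r' i = true)).card := by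
      unfold dS
      congr 1
      apply filter_congr
      intro i hi
      have hlt : i.val < f := by
        rw [mem_sdiff] at hi
        have := hi.2
        simp only [Pb, mem_filter, mem_univ, true_and] at this
        omega
      rw [(hinv.1 i hlt).2]
      cases r' i <;> simp
    rw [hA0, hB1, Finset.card_filter_add_card_filter_not, card_compl_Pb hd]
  have hact1 : 1 ≤ dS (Pb f) A' r' := by omega
  have hactle : dS (Pb f) A' r' ≤ dS (Pb f) A' r + dS (Pb f) r r' := dS_triangle _ _ _ _
  -- per-pair facts
  have hpair : ∀ j : Fin m,
      (dS (Pset f j) r r' = 0 →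
        nuP s (dS (univ \ Pset f j) (H' j) r') (dS (Pset f j) (H' j) r')
          ≤ 2 * dS (univ \ Pset f j) (H' j) r + (2 - dS (Pset f j) (H' j) r)) ∧
      (1 ≤ dS (Pset f j) r r' →
        nuP s (dS (univ \ Pset f j) (H' j) r') (dS (Pset f j) (H' j) r') + 1
          ≤ 2 * dS (univ \ Pset f j) (H' j) r + (2 - dS (Pset f j) (H' j) r)) := by
    intro j
    have h2a : dS (Pset f j) (H' j) r ≤ 2 :=
      le_trans (dS_le_card _ _ _) (le_of_eq (card_Pset hd j))
    have h2b : dS (Pset f j) (H' j) r' ≤ 2 :=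
      le_trans (dS_le_card _ _ _) (le_of_eq (card_Pset hd j))
    have h2c : dS (Pset f j) r r' ≤ 2 :=
      le_trans (dS_le_card _ _ _) (le_of_eq (card_Pset hd j))
    have hsp : dH (H' j) r' = dS (univ \ Pset f j) (H' j) r' + dS (Pset f j) (H' j) r' :=
      dS_split _ _ _
    have hsurv : s + 1 ≤ dS (univ \ Pset f j) (H' j) r' + dS (Pset f j) (H' j) r' := by
      rw [← hsp]; exact hsH j
    have houtrr : dH r r' = dS (univ \ Pset f j) r r' + dS (Pset f j) r r' := dS_split _ _ _
    have hT2' : dS (univ \ Pset f j) (H' j) r'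
        ≤ dS (univ \ Pset f j) (H' j) r + dS (univ \ Pset f j) r r' := dS_triangle _ _ _ _
    have hT3 : dS (Pset f j) (H' j) r ≤ dS (Pset f j) (H' j) r' + dS (Pset f j) r r' := by
      calc dS (Pset f j) (H' j) r
          ≤ dS (Pset f j) (H' j) r' + dS (Pset f j) r' r := dS_triangle _ _ _ _
      _ = dS (Pset f j) (H' j) r' + dS (Pset f j) r r' := by rw [dS_comm (Pset f j) r' r]
    have hrel := pairRel (H' j (c1 hd j)) (H' j (c2 hd j)) (r (c1 hd j)) (r (c2 hd j))
      (r' (c1 hd j)) (r' (c2 hd j))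
    rw [← dS_pair hd j (H' j) r, ← dS_pair hd j r r', ← dS_pair hd j (H' j) r'] at hrel
    have hkey := pairDec s (dS (univ \ Pset f j) (H' j) r) (dS (Pset f j) (H' j) r)
      (dS (univ \ Pset f j) (H' j) r') (dS (Pset f j) (H' j) r') (dS (Pset f j) r r')
      (dH r r') h2a h2b h2c hc (by omega) (by omega) hT3 hrel.1 hrel.2.1 hrel.2.2 hsurv
    unfold nuP
    constructor
    · intro h0
      have := hkey.1 h0
      omega
    · intro h1
      have := hkey.2 h1
      omega
  have hπsum : dS (Pb f) r r' = ∑ j : Fin m, dS (Pset f j) r r' := Pb_eq_biUnion hd r r'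
  by_cases hπ0 : dS (Pb f) r r' = 0
  · have hall : ∀ j : Fin m, dS (Pset f j) r r' = 0 := by
      intro j
      have hz : ∑ j : Fin m, dS (Pset f j) r r' = 0 := by rw [← hπsum]; exact hπ0
      exact Finset.sum_eq_zero_iff.mp hz j (mem_univ j)
    have hsum : ∑ j : Fin m, nuP s (dS (univ \ Pset f j) (H' j) r') (dS (Pset f j) (H' j) r')
        ≤ ∑ j : Fin m, (2 * dS (univ \ Pset f j) (H' j) r + (2 - dS (Pset f j) (H' j) r)) :=
      Finset.sum_le_sum (fun j _ => (hpair j).1 (hall j))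
    have hactle' : dS (Pb f) A' r' ≤ dS (Pb f) A' r := by omega
    have hA : dS (Pb f) A' r' - min s (dS (Pb f) A' r') < dS (Pb f) A' r := by omega
    unfold nu
    exact Nat.add_lt_add_of_lt_of_le hA hsum
  · obtain ⟨j0, -, hj0⟩ := Finset.exists_ne_zero_of_sum_ne_zero
      (show ∑ j : Fin m, dS (Pset f j) r r' ≠ 0 from by rw [← hπsum]; exact hπ0)
    have hsum : ∑ j : Fin m, nuP s (dS (univ \ Pset f j) (H' j) r') (dS (Pset f j) (H' j) r')
        < ∑ j : Fin m, (2 * dS (univ \ Pset f j) (H' j) r + (2 - dS (Pset f j) (H' j) r)) := by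
      apply Finset.sum_lt_sum
      · intro j _
        by_cases h : dS (Pset f j) r r' = 0
        · exact (hpair j).1 h
        · have := (hpair j).2 (by omega)
          omega
      · refine ⟨j0, mem_univ j0, ?_⟩
        have := (hpair j0).2 (by omega)
        omega
    have hA : dS (Pb f) A' r' - min s (dS (Pb f) A' r') ≤ dS (Pb f) A' r := by omega
    unfold nu
    exact Nat.add_lt_add_of_le_of_lt hA hsum

end Strategy

section Game

variable {d : ℕ}

lemma dH_self (x : Vtx d) : dH x x = 0 := dS_self _ x

def copsFn {m : ℕ} (A B : Vtx d) (H : Fin m → Vtx d) : Fin (m+2) → Vtx d :=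
  Fin.cons A (Fin.cons B H)

lemma copsFn_zero {m : ℕ} (A B : Vtx d) (H : Fin m → Vtx d) : copsFn A B H 0 = A :=
  Fin.cons_zero _ _

lemma copsFn_one {m : ℕ} (A B : Vtx d) (H : Fin m → Vtx d) : copsFn A B H 1 = B := by
  have e : ((0 : Fin (m+1)).succ) = (1 : Fin (m+2)) := Fin.succ_zero_eq_one
  rw [copsFn, ← e, Fin.cons_succ, Fin.cons_zero]

lemma copsFn_two {m : ℕ} (A B : Vtx d) (H : Fin m → Vtx d) (j : Fin m) :
    copsFn A B H j.succ.succ = H j := by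
  rw [copsFn, Fin.cons_succ, Fin.cons_succ]

end Game

end S14

section CChelp

variable {W : Type*}

lemma canCatch_succ_s14 {G : SimpleGraph W} {sc sr : ℕ} {k : ℕ} :
    ∀ (n : ℕ) (cops : Fin k → W) (r : W),
      CanCatch G sc sr n cops r → CanCatch G sc sr (n+1) cops r := by
  intro n
  induction n with
  | zero =>
    intro cops r h
    rw [CanCatch] at h
    rw [CanCatch]
    exact Or.inl h
  | succ n ih =>
    intro cops r h
    rw [CanCatch] at h ⊢
    rcases h with h | ⟨cops', hstep, h2⟩
    · exact Or.inl h
    · refine Or.inr ⟨cops', hstep, ?_⟩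
      rcases h2 with h2 | h3
      · exact Or.inl h2
      · exact Or.inr fun r' hr' => ih cops' r' (h3 r' hr')

lemma canCatch_mono_s14 {G : SimpleGraph W} {sc sr : ℕ} {k : ℕ}
    {n n' : ℕ} (h : n ≤ n') (cops : Fin k → W) (r : W)
    (hc : CanCatch G sc sr n cops r) : CanCatch G sc sr n' cops r := by
  induction h with
  | refl => exact hc
  | step h ih => exact canCatch_succ_s14 _ _ _ ih

end CChelp

namespace S14

lemma main {d f m s : ℕ} (hs : 1 ≤ s) (hf : f ≤ 2*s+1) (hd : d = f + 2*m) :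
    ∀ (n : ℕ) (A B : Vtx d) (H : Fin m → Vtx d) (r : Vtx d),
      INV f A B → nu s f A H r ≤ n →
      CanCatch (hypercube d) s s (n+2) (copsFn A B H) r := by
  intro n
  induction n using Nat.strong_induction_on with
  | _ n ih =>
    intro A B H r hinv hnu
    obtain ⟨A', B', H', hdA, hdB, hdHm, hinv', hEA, hEH⟩ :=
      policy (s := s) hd A B H r hinv
    have e2 : n + 2 = (n+1)+1 := rfl
    rw [e2, CanCatch]
    refine Or.inr ⟨copsFn A' B' H', ?_, Or.inr ?_⟩
    · intro i
      refine Fin.cases ?_ (fun i1 => ?_) i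
      · rw [copsFn_zero, copsFn_zero]
        exact copStep_of_dH_le hdA
      · refine Fin.cases ?_ (fun j => ?_) i1
        · have e : ((0 : Fin (m+1)).succ) = (1 : Fin (m+2)) := Fin.succ_zero_eq_one
          rw [e, copsFn_one, copsFn_one]
          exact copStep_of_dH_le hdB
        · rw [copsFn_two, copsFn_two]
          exact copStep_of_dH_le (hdHm j)
    · intro r' hr'
      have hc : dH r r' ≤ s := dH_le_of_robberStep hr'
      by_cases hcap : ∃ i, dH (copsFn A' B' H' i) r' ≤ s
      · obtain ⟨i0, hi0⟩ := hcap
        rw [CanCatch]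
        refine Or.inr ⟨Function.update (copsFn A' B' H') i0 r', ?_, Or.inl ⟨i0, ?_⟩⟩
        · intro i
          by_cases hii : i = i0
          · subst hii
            rw [Function.update_self]
            exact copStep_of_dH_le hi0
          · rw [Function.update_of_ne hii]
            exact copStep_of_dH_le (by rw [dH_self]; omega)
        · exact Function.update_self _ _ _
      · push_neg at hcap
        have hsA : s + 1 ≤ dH A' r' := by
          have := hcap 0
          rw [copsFn_zero] at this
          omega
        have hsB : s + 1 ≤ dH B' r' := by
          have := hcap 1
          rw [copsFn_one] at this
          omega
        have hsH : ∀ j, s + 1 ≤ dH (H' j) r' := by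
          intro j
          have := hcap j.succ.succ
          rw [copsFn_two] at this
          omega
        have hold : nu s f A H r = dS (Pb f) A' r + ∑ j : Fin m,
            (2 * dS (univ \ Pset f j) (H' j) r + (2 - dS (Pset f j) (H' j) r)) := by
          unfold nu nuP
          rw [hEA]
          congr 1
          apply Finset.sum_congr rfl
          intro j _
          rw [(hEH j).1, (hEH j).2]
        have hdec : nu s f A' H' r' < nu s f A H r := by
          rw [hold]
          exact decrease hs hf hd A' B' H' r r' hinv' hc hsA hsB hsH
        have := ih (nu s f A' H' r') (by omega) A' B' H' r' hinv' le_rfl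
        exact canCatch_mono_s14 (by omega) _ _ this

end S14

/-- For `s ≥ 2` and `d ≥ 2s`, `c_{s,s}(Q_d) ≤ ⌈(d − 2s + 3)/2⌉`. -/
theorem statement14 (s d : ℕ) (hs : 2 ≤ s) (hd : 2 * s ≤ d) :
    copNumber (hypercube d) s s ≤ (d - 2 * s + 3 + 1) / 2 := by
  classical
  set m := (d - 2*s)/2 with hm
  set f := 2*s + (d - 2*s) % 2 with hfdef
  have hdd : d = f + 2*m := by omega
  have hf : f ≤ 2*s + 1 := by omega
  have hk : (d - 2*s + 3 + 1)/2 = m + 2 := by omega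
  apply Nat.sInf_le
  rw [hk]
  rw [Set.mem_setOf_eq]
  refine ⟨S14.copsFn (fun _ => false) (fun i => decide (i.val < f))
    (fun (_ : Fin m) (_ : Fin d) => false), fun r => ?_⟩
  refine ⟨S14.nu s f (fun _ => false) (fun (_ : Fin m) (_ : Fin d) => false) r + 2, ?_⟩
  apply S14.main (by omega) hf hdd
  · constructor
    · intro i hi
      exact ⟨rfl, by simp [hi]⟩
    · intro i hi
      simp [Nat.not_lt.mpr hi]
  · exact le_rfl
end
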